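/- arXiv:1103.2575 — 5 statements merged into one kernel-verified Lean document; each statement's English description precedes it below -/
import Mathlib

section
/- Let P ⊆ ℝ^D be a pointed polyhedron that is the intersection of n closed halfspaces in general position, and suppose P has exactly N vertices. Let ℓ be a linear functional that attains its minimum over P and takes distinct values at distinct vertices of P, let B ∈ ℝ, suppose every face of P on which ℓ < B holds pointwise is bounded, and suppose d = dim P^{ℓ<B} < D. Then for every i with 0 ≤ i ≤ d, the number of i-dimensional faces f of P with ℓ < B pointwise on f is at most N · C(d,i), where C(·,·) denotes the binomial coefficient. -/
open Set Classical

/-- `f` is an (exposed) face of `P`: the empty set, `P` itself, or the set of maximizers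
of a linear functional over `P`. -/
def IsFace {V : Type*} [AddCommGroup V] [Module ℝ V] (P f : Set V) : Prop :=
  f = ∅ ∨ f = P ∨ ∃ l : V →ₗ[ℝ] ℝ, f = {x ∈ P | ∀ y ∈ P, l y ≤ l x}

/-- `v` is a vertex of `P`: the singleton `{v}` is a face of `P`. -/
def IsVertex {V : Type*} [AddCommGroup V] [Module ℝ V] (P : Set V) (v : V) : Prop :=
  IsFace P {v}

/-- Dimension of a face: `-1` for the empty face, otherwise the dimension of its
affine hull. -/
noncomputable def faceDim {V : Type*} [AddCommGroup V] [Module ℝ V] (f : Set V) : ℤ :=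
  if f = ∅ then -1 else (Module.finrank ℝ (affineSpan ℝ f).direction : ℤ)

/-!
Every face `f` on which `l < B` is bounded, hence compact, so the maximizers of `l` on `f` form a
nonempty compact exposed subset; its extreme points are extreme points of `P`, i.e. vertices. Fix
such a top vertex `v`. By general position the `D` constraints active at `v` are coordinates on
`ℝ^D`, and in these coordinates every face through `v` is the set `F_T` of points of `P` at
which a subset `T` of the active constraints is tight, of dimension `D - |T|`. The vertex `v`
maximizes `l` on `F_T` exactly when `l` does not increase along the edges leaving `v` in the
directions freed by `T`, so an `i`-face topped by `v` is determined by an `i`-subset of the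
descending edges at `v`. These descending edges together span a face below `B` topped by `v`,
so there are at most `d` of them, and each vertex accounts for at most `C(d, i)` faces.
-/

open Filter Topology

lemma IsFace.subset {V : Type*} [AddCommGroup V] [Module ℝ V] {P f : Set V} (hf : IsFace P f) :
    f ⊆ P := by
  rcases hf with rfl | rfl | ⟨g, rfl⟩
  exacts [empty_subset P, subset_rfl, sep_subset P _]

lemma IsVertex.mem {V : Type*} [AddCommGroup V] [Module ℝ V] {P : Set V} {v : V}
    (hv : IsVertex P v) : v ∈ P :=
  IsFace.subset hv rfl

lemma exists_pos_of_eventually_nhdsGT {p : ℝ → Prop} (h : ∀ᶠ t in 𝓝[>] 0, p t) :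
    ∃ t > 0, p t :=
  (h.and eventually_mem_nhdsWithin).exists.imp fun _ ht => ⟨ht.2, ht.1⟩

section Halfspaces

variable {V ι : Type*} [AddCommGroup V] [Module ℝ V] (φ : ι → V →ₗ[ℝ] ℝ) (b : ι → ℝ)

def polyhedron : Set V := {x | ∀ i, φ i x ≤ b i}

def tightFace (T : Finset ι) : Set V := {x ∈ polyhedron φ b | ∀ i ∈ T, φ i x = b i}

variable {φ b}

lemma isFace_tightFace {T : Finset ι} (hT : (tightFace φ b T).Nonempty) :
    IsFace (polyhedron φ b) (tightFace φ b T) := by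
  obtain ⟨x₀, hx₀, hx₀T⟩ := hT
  have hsum_le : ∀ y ∈ polyhedron φ b, ∑ i ∈ T, φ i y ≤ ∑ i ∈ T, b i :=
    fun y hy => Finset.sum_le_sum fun i _ => hy i
  have hsum_eq : ∀ y ∈ polyhedron φ b,
      (∑ i ∈ T, φ i y = ∑ i ∈ T, b i ↔ ∀ i ∈ T, φ i y = b i) :=
    fun y hy => Finset.sum_eq_sum_iff_of_le fun i _ => hy i
  refine Or.inr (Or.inr ⟨∑ i ∈ T, φ i, ?_⟩)
  ext x
  simp only [LinearMap.sum_apply]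
  change _ ∧ _ ↔ _ ∧ _
  refine ⟨fun ⟨hx, hxT⟩ => ⟨hx, fun y hy => ?_⟩, fun ⟨hx, hmax⟩ => ⟨hx, ?_⟩⟩
  · rw [(hsum_eq x hx).2 hxT]
    exact hsum_le y hy
  · refine (hsum_eq x hx).1 (le_antisymm (hsum_le x hx) ?_)
    rw [← (hsum_eq x₀ hx₀).2 hx₀T]
    exact hmax x₀ hx₀

variable [Fintype ι]

variable (φ b) in
noncomputable def activeSet (x : V) : Finset ι := {i | φ i x = b i}

@[simp] lemma mem_activeSet {x : V} {i : ι} : i ∈ activeSet φ b x ↔ φ i x = b i := by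
  simp [activeSet]

lemma eventually_add_smul_mem_polyhedron {x w : V} (hx : x ∈ polyhedron φ b)
    (hw : ∀ i ∈ activeSet φ b x, φ i w ≤ 0) :
    ∀ᶠ t in 𝓝[>] (0 : ℝ), x + t • w ∈ polyhedron φ b := by
  refine eventually_all.2 fun i => ?_
  simp only [map_add, map_smul, smul_eq_mul]
  rcases (hx i).eq_or_lt with hi | hi
  · filter_upwards [eventually_mem_nhdsWithin] with t (ht : 0 < t)
    nlinarith [hw i (mem_activeSet.2 hi)]
  · have hcont : Continuous fun t : ℝ => φ i x + t * φ i w := by fun_prop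
    have := hcont.tendsto 0
    simp only [zero_mul, add_zero] at this
    exact nhdsWithin_le_nhds ((this.eventually (gt_mem_nhds hi)).mono fun _ h => h.le)

lemma eq_zero_of_mem_extremePoints {x u : V} (hx : x ∈ (polyhedron φ b).extremePoints ℝ)
    (hu : ∀ i ∈ activeSet φ b x, φ i u = 0) : u = 0 := by
  have hplus := eventually_add_smul_mem_polyhedron hx.1 fun i hi => (hu i hi).le
  have hminus := eventually_add_smul_mem_polyhedron (w := -u) hx.1 fun i hi => by simp [hu i hi]
  obtain ⟨t, ht, hplus, hminus⟩ := exists_pos_of_eventually_nhdsGT (hplus.and hminus)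
  have hseg := mem_openSegment_sub_add (𝕜 := ℝ) x (t • u)
  rw [smul_neg, ← sub_eq_add_neg] at hminus
  have := hx.2 hminus hplus hseg
  simpa [ne_of_gt ht] using this

lemma tightFace_activeSet_of_mem_extremePoints {x : V}
    (hx : x ∈ (polyhedron φ b).extremePoints ℝ) : tightFace φ b (activeSet φ b x) = {x} := by
  refine Set.eq_singleton_iff_unique_mem.2 ⟨⟨hx.1, fun i hi => mem_activeSet.1 hi⟩, ?_⟩
  rintro y ⟨-, hy⟩
  refine sub_eq_zero.1 (eq_zero_of_mem_extremePoints hx fun i hi => ?_)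
  rw [map_sub, hy i hi, mem_activeSet.1 hi, sub_self]

lemma isVertex_of_mem_extremePoints {x : V} (hx : x ∈ (polyhedron φ b).extremePoints ℝ) :
    IsVertex (polyhedron φ b) x := by
  have := tightFace_activeSet_of_mem_extremePoints hx
  unfold IsVertex
  rw [← this]
  exact isFace_tightFace (this ▸ singleton_nonempty x)

variable (φ b) in
/-- General position at `v`: the values of the constraints active at `v` are coordinates on `V`. -/
def IsSimpleAt (v : V) : Prop :=
  Function.Bijective (LinearMap.pi fun i : activeSet φ b v => φ i)

variable (φ b) in
/-- `tightFace φ b ((activeSet φ b v).erase j)` is the edge of the polyhedron at `v` relaxing the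
constraint `j`; these are the edges at `v` along which `l` does not increase. -/
noncomputable def descendingEdges (l : V →ₗ[ℝ] ℝ) (v : V) : Finset ι :=
  {j ∈ activeSet φ b v | ∀ x ∈ tightFace φ b ((activeSet φ b v).erase j), l x ≤ l v}

section SimpleVertex

variable {v : V} (hs : IsSimpleAt φ b v)

/-- `-edgeBasis hs i` points along the edge of the polyhedron at `v` relaxing the constraint `i`. -/
noncomputable def edgeBasis : Module.Basis (activeSet φ b v) ℝ V :=
  .ofEquivFun (LinearEquiv.ofBijective _ hs)

lemma edgeBasis_repr (x : V) (i : activeSet φ b v) : (edgeBasis hs).repr x i = φ i x := by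
  rw [edgeBasis, Module.Basis.ofEquivFun_repr_apply]
  rfl

lemma apply_edgeBasis (i j : activeSet φ b v) :
    φ j (edgeBasis hs i) = if i = j then 1 else 0 := by
  rw [← edgeBasis_repr hs, Module.Basis.repr_self, Finsupp.single_apply]

lemma sub_eq_sum_smul_edgeBasis (x : V) :
    x - v = ∑ i : activeSet φ b v, (φ i x - b i) • edgeBasis hs i := by
  conv_lhs => rw [← (edgeBasis hs).sum_repr (x - v)]
  refine Finset.sum_congr rfl fun i _ => ?_
  rw [edgeBasis_repr, map_sub, mem_activeSet.1 i.2]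

lemma apply_eq_add_sum_edgeBasis (g : V →ₗ[ℝ] ℝ) (x : V) :
    g x = g v + ∑ i : activeSet φ b v, (φ i x - b i) * g (edgeBasis hs i) := by
  rw [← sub_eq_iff_eq_add', ← map_sub, sub_eq_sum_smul_edgeBasis hs x, map_sum]
  simp only [map_smul, smul_eq_mul]

variable (hv : v ∈ polyhedron φ b) {T : Finset ι} (hT : T ⊆ activeSet φ b v)

include hv hT in
lemma eventually_sub_smul_edgeBasis_mem_tightFace {i : activeSet φ b v} (hi : ↑i ∉ T) :
    ∀ᶠ t in 𝓝[>] (0 : ℝ), v - t • edgeBasis hs i ∈ tightFace φ b T := by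
  have hdir (j : ι) (hj : j ∈ activeSet φ b v) : φ j (-edgeBasis hs i) ≤ 0 := by
    rw [map_neg, apply_edgeBasis hs i ⟨j, hj⟩, neg_nonpos]
    split_ifs <;> norm_num
  filter_upwards [eventually_add_smul_mem_polyhedron hv hdir] with t ht
  rw [smul_neg, ← sub_eq_add_neg] at ht
  refine ⟨ht, fun j hj => ?_⟩
  have hij : i ≠ ⟨j, hT hj⟩ := fun h => hi (h ▸ hj)
  rw [map_sub, map_smul, apply_edgeBasis hs i ⟨j, hT hj⟩, if_neg hij, mem_activeSet.1 (hT hj),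
    smul_zero, sub_zero]

include hv hT in
lemma forall_tightFace_le_iff (g : V →ₗ[ℝ] ℝ) :
    (∀ x ∈ tightFace φ b T, g x ≤ g v) ↔
      ∀ i : activeSet φ b v, ↑i ∉ T → 0 ≤ g (edgeBasis hs i) := by
  constructor
  · intro hmax i hi
    obtain ⟨t, ht, hmem⟩ := exists_pos_of_eventually_nhdsGT
      (eventually_sub_smul_edgeBasis_mem_tightFace hs hv hT hi)
    have := hmax _ hmem
    rw [map_sub, map_smul, smul_eq_mul] at this
    exact nonneg_of_mul_nonneg_right (by linarith) ht
  · rintro hedge x ⟨hx, hxT⟩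
    rw [apply_eq_add_sum_edgeBasis hs g x, add_le_iff_nonpos_right]
    refine Finset.sum_nonpos fun i _ => ?_
    by_cases hi : ↑i ∈ T
    · rw [hxT i hi, sub_self, zero_mul]
    · exact mul_nonpos_of_nonpos_of_nonneg (sub_nonpos.2 (hx i)) (hedge i hi)

include hs hv hT in
lemma faceDim_tightFace : faceDim (tightFace φ b T) = (activeSet φ b v \ T).card := by
  set e : ↥(activeSet φ b v \ T) → V :=
    fun i => edgeBasis hs ⟨i.1, (Finset.mem_sdiff.1 i.2).1⟩
  have hvF : v ∈ tightFace φ b T := ⟨hv, fun i hi => mem_activeSet.1 (hT hi)⟩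
  have hdir : (affineSpan ℝ (tightFace φ b T)).direction = Submodule.span ℝ (range e) := by
    refine le_antisymm ?_ (Submodule.span_le.2 ?_)
    · suffices affineSpan ℝ (tightFace φ b T) ≤ AffineSubspace.mk' v (Submodule.span ℝ (range e))
        by simpa using AffineSubspace.direction_le this
      refine affineSpan_le.2 fun x ⟨_, hxT⟩ => ?_
      rw [SetLike.mem_coe, AffineSubspace.mem_mk', vsub_eq_sub, sub_eq_sum_smul_edgeBasis hs x]
      refine Submodule.sum_mem _ fun i _ => ?_
      by_cases hi : ↑i ∈ T
      · rw [hxT i hi, sub_self, zero_smul]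
        exact Submodule.zero_mem _
      · exact Submodule.smul_mem _ _
          (Submodule.subset_span ⟨⟨i, Finset.mem_sdiff.2 ⟨i.2, hi⟩⟩, rfl⟩)
    · rintro _ ⟨i, rfl⟩
      obtain ⟨t, ht, hmem⟩ := exists_pos_of_eventually_nhdsGT
        (eventually_sub_smul_edgeBasis_mem_tightFace hs hv hT
          (i := ⟨i.1, (Finset.mem_sdiff.1 i.2).1⟩) (Finset.mem_sdiff.1 i.2).2)
      have := AffineSubspace.vsub_mem_direction (subset_affineSpan ℝ _ hvF)
        (subset_affineSpan ℝ _ hmem)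
      rw [vsub_eq_sub, sub_sub_cancel] at this
      simpa [ht.ne'] using Submodule.smul_mem _ t⁻¹ this
  have hind : LinearIndependent ℝ e :=
    (edgeBasis hs).linearIndependent.comp _ fun i j h =>
      Subtype.ext (congrArg (fun k : activeSet φ b v => (k : ι)) h)
  rw [faceDim, if_neg (nonempty_iff_ne_empty.1 ⟨v, hvF⟩), hdir, finrank_span_eq_card hind,
    Fintype.card_coe]

omit hT in
include hs hv in
lemma exists_eq_tightFace_of_mem {f : Set V} (hf : IsFace (polyhedron φ b) f) (hvf : v ∈ f) :
    ∃ T ⊆ activeSet φ b v, f = tightFace φ b T := by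
  rcases hf with rfl | rfl | ⟨g, rfl⟩
  · exact absurd hvf (notMem_empty v)
  · exact ⟨∅, Finset.empty_subset _, by simp [tightFace]⟩
  have hg : ∀ i, 0 ≤ g (edgeBasis hs i) := fun i =>
    (forall_tightFace_le_iff hs hv (Finset.empty_subset _) g).1 (fun x hx => hvf.2 x hx.1) i
      (Finset.notMem_empty _)
  have hmax_iff : ∀ x ∈ polyhedron φ b,
      g x = g v ↔ ∀ i : activeSet φ b v, 0 < g (edgeBasis hs i) → φ i x = b i := by
    intro x hx
    rw [apply_eq_add_sum_edgeBasis hs g x, add_eq_left, Finset.sum_eq_zero_iff_of_nonpos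
      fun (i : activeSet φ b v) _ => mul_nonpos_of_nonpos_of_nonneg (sub_nonpos.2 (hx i)) (hg i)]
    refine forall_congr' fun i => ?_
    rw [mul_eq_zero, sub_eq_zero, (hg i).lt_iff_ne', ← or_iff_not_imp_right]
    simp
  refine ⟨(Finset.univ.filter fun i => 0 < g (edgeBasis hs i)).map (.subtype _),
    fun j hj => ?_, ?_⟩
  · obtain ⟨i, -, rfl⟩ := Finset.mem_map.1 hj
    exact i.2
  ext x
  simp only [tightFace, Finset.mem_map, Finset.mem_filter, Finset.mem_univ, true_and,
    Function.Embedding.coe_subtype, forall_exists_index, and_imp, forall_apply_eq_imp_iff₂]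
  refine and_congr_right fun hx => ?_
  rw [← hmax_iff x hx]
  exact ⟨fun h => le_antisymm (hvf.2 x hx) (h v hvf.1), fun h y hy => h ▸ hvf.2 y hy⟩

include hs hv hT in
lemma sdiff_subset_descendingEdges {l : V →ₗ[ℝ] ℝ} (hmax : ∀ x ∈ tightFace φ b T, l x ≤ l v) :
    activeSet φ b v \ T ⊆ descendingEdges φ b l v := by
  intro j hj
  obtain ⟨hjA, hjT⟩ := Finset.mem_sdiff.1 hj
  refine Finset.mem_filter.2 ⟨hjA, (forall_tightFace_le_iff hs hv (Finset.erase_subset _ _) l).2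
    fun i hi => (forall_tightFace_le_iff hs hv hT l).1 hmax i ?_⟩
  have : (i : ι) = j := by simpa [i.2] using hi
  rwa [this]

omit hT in
include hs hv in
lemma forall_tightFace_sdiff_descendingEdges_le (l : V →ₗ[ℝ] ℝ) :
    ∀ x ∈ tightFace φ b (activeSet φ b v \ descendingEdges φ b l v), l x ≤ l v := by
  refine (forall_tightFace_le_iff hs hv Finset.sdiff_subset l).2 fun i hi => ?_
  have hdesc : ↑i ∈ descendingEdges φ b l v := by simpa [i.2] using hi
  replace hdesc := (Finset.mem_filter.1 hdesc).2
  exact (forall_tightFace_le_iff hs hv (Finset.erase_subset _ _) l).1 hdesc i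
    (Finset.notMem_erase _ _)

end SimpleVertex

lemma card_descendingEdges_le {l : V →ₗ[ℝ] ℝ} {B : ℝ} {d : ℕ}
    (hdim : ∀ f, IsFace (polyhedron φ b) f → (∀ x ∈ f, l x < B) → faceDim f ≤ d)
    {v : V} (hv : IsVertex (polyhedron φ b) v) (hs : IsSimpleAt φ b v) (hvB : l v < B) :
    (descendingEdges φ b l v).card ≤ d := by
  have hsub : descendingEdges φ b l v ⊆ activeSet φ b v := Finset.filter_subset _ _
  have hvF : v ∈ tightFace φ b (activeSet φ b v \ descendingEdges φ b l v) :=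
    ⟨hv.mem, fun i hi => mem_activeSet.1 (Finset.mem_sdiff.1 hi).1⟩
  have := hdim _ (isFace_tightFace ⟨v, hvF⟩) fun x hx =>
    (forall_tightFace_sdiff_descendingEdges_le hs hv.mem l x hx).trans_lt hvB
  rwa [faceDim_tightFace hs hv.mem Finset.sdiff_subset, Finset.sdiff_sdiff_eq_self hsub,
    Nat.cast_le] at this

end Halfspaces

section Normed

variable {V : Type*} [NormedAddCommGroup V] [NormedSpace ℝ V] [FiniteDimensional ℝ V]

lemma IsFace.isExposed {P f : Set V} (hf : IsFace P f) : IsExposed ℝ P f := by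
  rcases hf with rfl | rfl | ⟨g, rfl⟩
  · exact isExposed_empty
  · exact IsExposed.refl _
  · exact fun _ => ⟨LinearMap.toContinuousLinearMap g, rfl⟩

lemma IsFace.exists_mem_extremePoints_forall_le {P f : Set V} (hP : IsClosed P)
    (hf : IsFace P f) (hf_ne : f.Nonempty) (hf_bdd : Bornology.IsBounded f) (l : V →ₗ[ℝ] ℝ) :
    ∃ v ∈ f, v ∈ P.extremePoints ℝ ∧ ∀ x ∈ f, l x ≤ l v := by
  have hfP : IsExposed ℝ P f := hf.isExposed
  have hf_cpt : IsCompact f := Metric.isCompact_of_isClosed_isBounded (hfP.isClosed hP) hf_bdd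
  set l' := LinearMap.toContinuousLinearMap l
  have hM : IsExposed ℝ f {x ∈ f | ∀ y ∈ f, l' y ≤ l' x} := fun _ => ⟨l', rfl⟩
  obtain ⟨x, hx⟩ := hf_cpt.exists_isMaxOn hf_ne l'.continuous.continuousOn
  obtain ⟨v, hv⟩ := (hM.isCompact hf_cpt).extremePoints_nonempty ⟨x, hx.1, fun y hy => hx.2 hy⟩
  refine ⟨v, hv.1.1, ?_, hv.1.2⟩
  exact (hfP.isExtreme.trans hM.isExtreme).extremePoints_subset_extremePoints hv

variable {ι : Type*} {φ : ι → V →ₗ[ℝ] ℝ} {b : ι → ℝ}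

lemma isClosed_polyhedron : IsClosed (polyhedron φ b) := by
  simp only [polyhedron, ofPred_forall]
  exact isClosed_iInter fun i => isClosed_le (φ i).continuous_of_finiteDimensional continuous_const

variable [Fintype ι]

lemma exists_eq_tightFace_sdiff_of_isFace {l : V →ₗ[ℝ] ℝ} {B : ℝ}
    (hsimple : ∀ v, IsVertex (polyhedron φ b) v → IsSimpleAt φ b v)
    (hbdd : ∀ f, IsFace (polyhedron φ b) f → (∀ x ∈ f, l x < B) → Bornology.IsBounded f)
    {f : Set V} (hf : IsFace (polyhedron φ b) f) (hfB : ∀ x ∈ f, l x < B) {i : ℕ}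
    (hfi : faceDim f = i) :
    ∃ v, IsVertex (polyhedron φ b) v ∧ l v < B ∧ ∃ R ∈ (descendingEdges φ b l v).powersetCard i,
      f = tightFace φ b (activeSet φ b v \ R) := by
  have hf_ne : f.Nonempty := by
    by_contra h
    rw [faceDim, if_pos (not_nonempty_iff_eq_empty.1 h)] at hfi
    omega
  obtain ⟨v, hvf, hvext, hvmax⟩ :=
    hf.exists_mem_extremePoints_forall_le isClosed_polyhedron hf_ne (hbdd f hf hfB) l
  have hvert := isVertex_of_mem_extremePoints hvext
  have hs := hsimple v hvert
  obtain ⟨T, hT, rfl⟩ := exists_eq_tightFace_of_mem hs hvext.1 hf hvf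
  refine ⟨v, hvert, hfB v hvf, activeSet φ b v \ T, Finset.mem_powersetCard.2
    ⟨sdiff_subset_descendingEdges hs hvext.1 hT hvmax, ?_⟩, by rw [Finset.sdiff_sdiff_eq_self hT]⟩
  rw [faceDim_tightFace hs hvext.1 hT] at hfi
  exact_mod_cast hfi

theorem finite_and_ncard_faces_le {l : V →ₗ[ℝ] ℝ} {B : ℝ} {d : ℕ}
    (hsimple : ∀ v, IsVertex (polyhedron φ b) v → IsSimpleAt φ b v)
    (hfin : {v | IsVertex (polyhedron φ b) v}.Finite)
    (hbdd : ∀ f, IsFace (polyhedron φ b) f → (∀ x ∈ f, l x < B) → Bornology.IsBounded f)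
    (hdim : ∀ f, IsFace (polyhedron φ b) f → (∀ x ∈ f, l x < B) → faceDim f ≤ d) (i : ℕ) :
    {f | IsFace (polyhedron φ b) f ∧ (∀ x ∈ f, l x < B) ∧ faceDim f = i}.Finite ∧
      {f | IsFace (polyhedron φ b) f ∧ (∀ x ∈ f, l x < B) ∧ faceDim f = i}.ncard ≤
        {v | IsVertex (polyhedron φ b) v}.ncard * d.choose i := by
  set S := {f | IsFace (polyhedron φ b) f ∧ (∀ x ∈ f, l x < B) ∧ faceDim f = i}
  set vs := hfin.toFinset.filter (l · < B)
  set cover : Finset (Set V) := vs.biUnion fun v =>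
    ((descendingEdges φ b l v).powersetCard i).image fun R => tightFace φ b (activeSet φ b v \ R)
  have hS : S ⊆ cover := by
    rintro f ⟨hf, hfB, hfi⟩
    obtain ⟨v, hv, hvB, R, hR, rfl⟩ := exists_eq_tightFace_sdiff_of_isFace hsimple hbdd hf hfB hfi
    simp only [cover, vs, Finset.coe_biUnion, Finset.coe_image, mem_iUnion]
    exact ⟨v, by simp [hv, hvB], mem_image_of_mem _ hR⟩
  refine ⟨cover.finite_toSet.subset hS, ?_⟩
  calc S.ncard ≤ cover.card := (ncard_le_ncard hS cover.finite_toSet).trans (ncard_coe_finset _).le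
    _ ≤ ∑ v ∈ vs, ((descendingEdges φ b l v).powersetCard i).card :=
      Finset.card_biUnion_le.trans (Finset.sum_le_sum fun _ _ => Finset.card_image_le)
    _ ≤ ∑ v ∈ vs, d.choose i := Finset.sum_le_sum fun v hv => by
      obtain ⟨hv, hvB⟩ := Finset.mem_filter.1 hv
      rw [hfin.mem_toFinset] at hv
      rw [Finset.card_powersetCard]
      exact Nat.choose_le_choose i (card_descendingEdges_le hdim hv (hsimple v hv) hvB)
    _ = vs.card * d.choose i := by rw [Finset.sum_const, smul_eq_mul]
    _ ≤ _ := Nat.mul_le_mul_right _ <| by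
      rw [ncard_eq_toFinset_card _ hfin]
      exact Finset.card_filter_le _ _

end Normed

lemma Matrix.bijective_mulVecLin_of_linearIndependent_row {K m k : Type*} [Field K] [Fintype m]
    [Fintype k] {M : Matrix m k K} (hM : LinearIndependent K M.row)
    (hcard : Fintype.card m = Fintype.card k) : Function.Bijective M.mulVecLin := by
  have hsurj : Function.Surjective M.mulVecLin := by
    rw [← LinearMap.range_eq_top]
    refine Submodule.eq_top_of_finrank_eq ?_
    rw [← Matrix.rank, hM.rank_matrix, Module.finrank_fintype_fun_eq_card]
  refine ⟨(LinearMap.injective_iff_surjective_of_finrank_eq_finrank ?_).2 hsurj, hsurj⟩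
  simp [hcard]

lemma isSimpleAt_dotProduct {ι m : Type*} [Fintype ι] [Fintype m] {a : ι → m → ℝ} {b : ι → ℝ}
    {v : m → ℝ} (hcard : {i | a i ⬝ᵥ v = b i}.ncard = Fintype.card m)
    (hind : LinearIndependent ℝ fun i : {i // a i ⬝ᵥ v = b i} => a i) :
    IsSimpleAt (fun i => dotProductBilin ℝ ℝ (a i)) b v := by
  set A := activeSet (fun i => dotProductBilin ℝ ℝ (a i)) b v
  have hA (i : ι) : i ∈ A ↔ a i ⬝ᵥ v = b i := by simp [A]
  have hrow : LinearIndependent ℝ (Matrix.of fun i : A => a i).row :=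
    hind.comp (fun i : A => ⟨i, (hA i).1 i.2⟩) fun i j h =>
      Subtype.ext (congrArg (fun k : {i // a i ⬝ᵥ v = b i} => (k : ι)) h)
  have hAcard : Fintype.card A = Fintype.card m := by
    rw [Fintype.card_coe, ← hcard, ← Set.ncard_coe_finset]
    congr 1
    ext i
    exact hA i
  exact Matrix.bijective_mulVecLin_of_linearIndependent_row hrow hAcard

theorem general_pos_faces_general (D n : ℕ)
    (a : Fin n → Fin D → ℝ) (b : Fin n → ℝ)
    (P : Set (Fin D → ℝ)) (hP : P = ⋂ i, {x | ∑ j, a i j * x j ≤ b i})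
    (hgenpos : ∀ v, IsVertex P v →
      {i : Fin n | ∑ j, a i j * v j = b i}.ncard = D ∧
      LinearIndependent ℝ (fun i : {i : Fin n // ∑ j, a i j * v j = b i} => a i))
    (N : ℕ) (hNfin : {v | IsVertex P v}.Finite) (hN : {v | IsVertex P v}.ncard = N)
    (l : (Fin D → ℝ) →ₗ[ℝ] ℝ)
    (B : ℝ)
    (hbdd : ∀ f, IsFace P f → (∀ x ∈ f, l x < B) → Bornology.IsBounded f)
    (d : ℕ)
    (hdim_le : ∀ f, IsFace P f → (∀ x ∈ f, l x < B) → faceDim f ≤ (d : ℤ)) :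
    ∀ i : ℕ, i ≤ d →
      {f : Set (Fin D → ℝ) | IsFace P f ∧ (∀ x ∈ f, l x < B) ∧ faceDim f = (i : ℤ)}.Finite ∧
      {f : Set (Fin D → ℝ) | IsFace P f ∧ (∀ x ∈ f, l x < B) ∧ faceDim f = (i : ℤ)}.ncard ≤
        N * d.choose i := by
  set φ : Fin n → (Fin D → ℝ) →ₗ[ℝ] ℝ := fun i => dotProductBilin ℝ ℝ (a i)
  obtain rfl : P = polyhedron φ b := by
    ext x
    simp [hP, polyhedron, φ, dotProduct]
  have hsimple (v : Fin D → ℝ) (hv : IsVertex (polyhedron φ b) v) : IsSimpleAt φ b v := by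
    obtain ⟨hcard, hind⟩ := hgenpos v hv
    exact isSimpleAt_dotProduct (hcard.trans (Fintype.card_fin D).symm) hind
  intro i _
  rw [← hN]
  exact finite_and_ncard_faces_le hsimple hNfin hbdd hdim_le i

theorem general_pos_faces (D n : ℕ)
    (a : Fin n → Fin D → ℝ) (b : Fin n → ℝ) (ha : ∀ i, a i ≠ 0)
    (P : Set (Fin D → ℝ)) (hP : P = ⋂ i, {x | ∑ j, a i j * x j ≤ b i})
    (hpointed : ∃ v, IsVertex P v)
    (hgenpos : ∀ v, IsVertex P v →
      {i : Fin n | ∑ j, a i j * v j = b i}.ncard = D ∧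
      LinearIndependent ℝ (fun i : {i : Fin n // ∑ j, a i j * v j = b i} => a i))
    (N : ℕ) (hNfin : {v | IsVertex P v}.Finite) (hN : {v | IsVertex P v}.ncard = N)
    (l : (Fin D → ℝ) →ₗ[ℝ] ℝ)
    (hmin : ∃ m ∈ P, ∀ x ∈ P, l m ≤ l x)
    (hinj : ∀ u v, IsVertex P u → IsVertex P v → l u = l v → u = v)
    (B : ℝ)
    (hbdd : ∀ f, IsFace P f → (∀ x ∈ f, l x < B) → Bornology.IsBounded f)
    (d : ℕ) (hdD : d < D)
    (hdim_le : ∀ f, IsFace P f → (∀ x ∈ f, l x < B) → faceDim f ≤ (d : ℤ))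
    (hdim_ex : ∃ f, IsFace P f ∧ (∀ x ∈ f, l x < B) ∧ faceDim f = (d : ℤ)) :
    ∀ i : ℕ, i ≤ d →
      {f : Set (Fin D → ℝ) | IsFace P f ∧ (∀ x ∈ f, l x < B) ∧ faceDim f = (i : ℤ)}.Finite ∧
      {f : Set (Fin D → ℝ) | IsFace P f ∧ (∀ x ∈ f, l x < B) ∧ faceDim f = (i : ℤ)}.ncard ≤
        N * d.choose i :=
  general_pos_faces_general D n a b P hP hgenpos N hNfin hN l B hbdd d hdim_le
end

section
/- Let P ⊆ ℝ^D be a full-dimensional pointed polyhedron that is the intersection of finitely many closed halfspaces with D ≥ 1, let ℓ be a linear functional that attains its minimum over P, and let B ∈ ℝ be strictly greater than the minimum value of ℓ on P. If every face of P on which ℓ < B holds pointwise has dimension at most 0, then there is exactly one vertex v of P with ℓ(v) < B. -/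
open Set Classical

lemma face_subsingleton {D : ℕ} {f : Set (Fin D → ℝ)} (hd : faceDim f ≤ 0)
    {x y : Fin D → ℝ} (hx : x ∈ f) (hy : y ∈ f) : x = y := by
  have hne : f ≠ ∅ := fun h => by simp [h] at hx
  rw [faceDim, if_neg hne] at hd
  have h0 : Module.finrank ℝ (affineSpan ℝ f).direction = 0 := by omega
  have hbot : (affineSpan ℝ f).direction = ⊥ := Submodule.finrank_eq_zero.mp h0
  have hm := AffineSubspace.vsub_mem_direction (subset_affineSpan ℝ f hx) (subset_affineSpan ℝ f hy)
  rw [hbot, Submodule.mem_bot] at hm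
  exact sub_eq_zero.mp hm

lemma vertex_expose {D : ℕ} (hD : 1 ≤ D) {P : Set (Fin D → ℝ)}
    (hfull : affineSpan ℝ P = ⊤) {v : Fin D → ℝ} (hv : IsVertex P v) :
    v ∈ P ∧ ∃ g : (Fin D → ℝ) →ₗ[ℝ] ℝ, (∀ y ∈ P, g y ≤ g v) ∧ ∀ y ∈ P, g y = g v → y = v := by
  rcases hv with h | h | ⟨g, hg⟩
  · exact absurd h (Set.singleton_ne_empty v)
  · -- P = {v}, contradicts full-dimensionality
    exfalso
    rw [← h] at hfull
    have h1 : (affineSpan ℝ ({v} : Set (Fin D → ℝ))).direction = ⊥ := by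
      rw [direction_affineSpan, vectorSpan_singleton]
    rw [hfull, AffineSubspace.direction_top] at h1
    have h2 : Module.finrank ℝ (⊤ : Submodule ℝ (Fin D → ℝ)) = D := by
      simp
    rw [h1] at h2
    simp [finrank_bot] at h2
    omega
  · have hvmem : v ∈ {x ∈ P | ∀ y ∈ P, g y ≤ g x} := by rw [← hg]; exact rfl
    obtain ⟨hvP, hvmax⟩ := hvmem
    refine ⟨hvP, g, hvmax, fun y hyP hye => ?_⟩
    have : y ∈ {x ∈ P | ∀ z ∈ P, g z ≤ g x} := ⟨hyP, fun z hz => hye ▸ hvmax z hz⟩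
    rw [← hg] at this
    exact this

lemma bounded_of_exposed {D : ℕ} {P : Set (Fin D → ℝ)} (hPc : IsClosed P) (hPconv : Convex ℝ P)
    {v : Fin D → ℝ} (hvP : v ∈ P) {g : (Fin D → ℝ) →ₗ[ℝ] ℝ}
    (hmax : ∀ y ∈ P, g y ≤ g v) (hstrict : ∀ y ∈ P, g y = g v → y = v) (c : ℝ) :
    Bornology.IsBounded {x ∈ P | c ≤ g x} := by
  by_contra hub
  -- extract a sequence going to infinity
  have hseq : ∀ k : ℕ, ∃ x, (x ∈ P ∧ c ≤ g x) ∧ (k : ℝ) + 1 < ‖x - v‖ := by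
    intro k
    by_contra hco
    push_neg at hco
    apply hub
    have : {x ∈ P | c ≤ g x} ⊆ Metric.closedBall v ((k : ℝ) + 1) := by
      intro x hx
      rw [Metric.mem_closedBall, dist_eq_norm]
      exact hco x hx
    exact (Metric.isBounded_closedBall).subset this
  choose x hx hr using hseq
  set r : ℕ → ℝ := fun k => ‖x k - v‖ with hrdef
  have hrpos : ∀ k, 0 < r k := fun k => lt_trans (by positivity) (hr k)
  set d : ℕ → (Fin D → ℝ) := fun k => (r k)⁻¹ • (x k - v) with hddef
  have hdnorm : ∀ k, ‖d k‖ = 1 := by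
    intro k
    rw [hddef]
    simp only [norm_smul, norm_inv, Real.norm_eq_abs, abs_of_pos (hrpos k)]
    exact inv_mul_cancel₀ (ne_of_gt (hrpos k))
  have hdball : ∀ k, d k ∈ Metric.closedBall (0 : Fin D → ℝ) 1 := by
    intro k
    rw [Metric.mem_closedBall, dist_zero_right, hdnorm k]
  obtain ⟨dl, _, φ, hφ, htend⟩ := tendsto_subseq_of_bounded Metric.isBounded_closedBall hdball
  have hdlnorm : ‖dl‖ = 1 := by
    have h1 : Filter.Tendsto (fun k => ‖d (φ k)‖) Filter.atTop (nhds ‖dl‖) :=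
      (continuous_norm.continuousAt.tendsto.comp htend)
    have h2 : (fun k => ‖d (φ k)‖) = fun _ => (1 : ℝ) := funext fun k => hdnorm (φ k)
    rw [h2] at h1
    exact (tendsto_nhds_unique tendsto_const_nhds h1).symm
  -- the ray v + t • dl is contained in P
  have hray : ∀ t : ℝ, 0 ≤ t → v + t • dl ∈ P := by
    intro t ht
    have hmem : ∀ᶠ k in Filter.atTop, v + t • d (φ k) ∈ P := by
      rw [Filter.eventually_atTop]
      refine ⟨⌈t⌉₊, fun k hk => ?_⟩
      have htr : t ≤ r (φ k) := by
        have h1 : (k : ℝ) ≤ φ k := by exact_mod_cast hφ.le_apply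
        have := hr (φ k)
        have h2 : t ≤ (⌈t⌉₊ : ℝ) := Nat.le_ceil t
        have h3 : (⌈t⌉₊ : ℝ) ≤ (k : ℝ) := by exact_mod_cast hk
        linarith
      have hμ : t / r (φ k) ∈ Set.Icc (0:ℝ) 1 := by
        constructor
        · positivity
        · rw [div_le_one (hrpos (φ k))]; exact htr
      have := hPconv.add_smul_sub_mem hvP (hx (φ k)).1 hμ
      have heq : v + (t / r (φ k)) • (x (φ k) - v) = v + t • d (φ k) := by
        rw [hddef]
        simp only [smul_smul]
        rw [div_eq_mul_inv]
      rw [heq] at this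
      exact this
    have hlim : Filter.Tendsto (fun k => v + t • d (φ k)) Filter.atTop (nhds (v + t • dl)) :=
      Filter.Tendsto.const_add v (htend.const_smul t)
    exact hPc.mem_of_tendsto hlim hmem
  -- g dl ≥ 0
  have hgd : 0 ≤ g dl := by
    have hlow : ∀ k, (c - g v) / r (φ k) ≤ g (d (φ k)) := by
      intro k
      rw [hddef]
      simp only [map_smul, map_sub, smul_eq_mul]
      rw [div_eq_inv_mul]
      have := (hx (φ k)).2
      have h := inv_pos.mpr (hrpos (φ k))
      nlinarith [this, h.le]
    have hrtop : Filter.Tendsto (fun k : ℕ => r (φ k)) Filter.atTop Filter.atTop := by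
      apply Filter.tendsto_atTop_mono _ tendsto_natCast_atTop_atTop
      intro k
      have h1 : (k : ℝ) ≤ (φ k : ℝ) := by exact_mod_cast hφ.le_apply
      linarith [hr (φ k)]
    have hzero : Filter.Tendsto (fun k => (c - g v) / r (φ k)) Filter.atTop (nhds 0) :=
      Filter.Tendsto.div_atTop tendsto_const_nhds hrtop
    have hgtend : Filter.Tendsto (fun k => g (d (φ k))) Filter.atTop (nhds (g dl)) :=
      (g.continuous_of_finiteDimensional.continuousAt.tendsto.comp htend)
    exact le_of_tendsto_of_tendsto' hzero hgtend hlow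
  -- contradiction
  have h1 : v + (1:ℝ) • dl ∈ P := hray 1 zero_le_one
  have h2 : g (v + (1:ℝ) • dl) = g v := by
    have := hmax _ h1
    have h3 : g v ≤ g (v + (1:ℝ) • dl) := by
      simp only [map_add, map_smul, smul_eq_mul, one_mul]
      linarith
    linarith
  have := hstrict _ h1 h2
  have hdl0 : dl = 0 := by
    have : v + (1:ℝ) • dl = v := this
    simpa using this
  rw [hdl0] at hdlnorm
  simp at hdlnorm

lemma vertices_finite {D n : ℕ} (hD : 1 ≤ D) (a : Fin n → Fin D → ℝ) (b : Fin n → ℝ)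
    (P : Set (Fin D → ℝ)) (hP : P = ⋂ i, {x | ∑ j, a i j * x j ≤ b i})
    (hfull : affineSpan ℝ P = ⊤) :
    Set.Finite {v | IsVertex P v} := by
  have hinj : Set.InjOn (fun v => {i | ∑ j, a i j * v j = b i} : (Fin D → ℝ) → Set (Fin n))
      {v | IsVertex P v} := by
    intro v hv w hw heq
    by_contra hne
    obtain ⟨hvP, g, hgmax, hgstrict⟩ := vertex_expose hD hfull hv
    obtain ⟨hwP, -⟩ := vertex_expose hD hfull hw
    set d : Fin D → ℝ := w - v with hddef
    have hd0 : d ≠ 0 := sub_ne_zero.mpr (Ne.symm hne)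
    -- tight constraints: a i · d = 0
    have htight : ∀ i, (∑ j, a i j * v j = b i) → ∑ j, a i j * d j = 0 := by
      intro i hi
      have hiw : ∑ j, a i j * w j = b i := by
        have h2 : i ∈ (fun v => {i | ∑ j, a i j * v j = b i} : (Fin D → ℝ) → Set (Fin n)) w := by
          rw [← heq]; exact hi
        exact h2
      have : ∑ j, a i j * d j = ∑ j, a i j * w j - ∑ j, a i j * v j := by
        rw [← Finset.sum_sub_distrib]
        congr 1; funext j
        simp [hddef, mul_sub]
      rw [this, hi, hiw, sub_self]
    -- the open set of strictly-satisfied non-tight constraints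
    set U : Set (Fin D → ℝ) :=
      ⋂ i : {i : Fin n // ¬ (∑ j, a i j * v j = b i)}, {x | ∑ j, a i.1 j * x j < b i.1} with hUdef
    have hcont : ∀ i : Fin n, Continuous (fun x : Fin D → ℝ => ∑ j, a i j * x j) := by
      intro i
      exact continuous_finset_sum _ (fun j _ => continuous_const.mul (continuous_apply j))
    have hUopen : IsOpen U := by
      apply isOpen_iInter_of_finite
      intro i
      exact isOpen_lt (hcont i.1) continuous_const
    have hvU : v ∈ U := by
      rw [hUdef]
      rw [Set.mem_iInter]
      intro i
      have hle : ∑ j, a i.1 j * v j ≤ b i.1 := by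
        rw [hP] at hvP
        exact Set.mem_iInter.mp hvP i.1
      exact lt_of_le_of_ne hle i.2
    obtain ⟨ε, hε, hball⟩ := Metric.isOpen_iff.mp hUopen v hvU
    set δ : ℝ := ε / (2 * (‖d‖ + 1)) with hδdef
    have hδpos : 0 < δ := by positivity
    have hδd : ‖δ • d‖ < ε := by
      rw [norm_smul, Real.norm_eq_abs, abs_of_pos hδpos, hδdef]
      rw [div_mul_eq_mul_div, div_lt_iff₀ (by positivity)]
      nlinarith [norm_nonneg d, hε]
    -- both v + δ•d and v - δ•d are in P
    have hmemP : ∀ s : ℝ, s = δ ∨ s = -δ → v + s • d ∈ P := by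
      intro s hs
      have hsabs : ‖s • d‖ < ε := by
        rcases hs with h | h <;> rw [h] <;> simpa [norm_smul, abs_of_pos hδpos] using hδd
      have hmemU : v + s • d ∈ U := by
        apply hball
        rw [Metric.mem_ball, dist_eq_norm]
        simpa using hsabs
      rw [hP, Set.mem_iInter]
      intro i
      by_cases hti : ∑ j, a i j * v j = b i
      · have : ∑ j, a i j * (v j + s * d j) = ∑ j, a i j * v j + s * ∑ j, a i j * d j := by
          rw [Finset.mul_sum, ← Finset.sum_add_distrib]
          congr 1; funext j; ring
        show ∑ j, a i j * (v + s • d) j ≤ b i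
        have happ : ∀ j, (v + s • d) j = v j + s * d j := fun j => rfl
        simp only [happ]
        rw [this, htight i hti, hti]
        simp
      · have h3 := Set.mem_iInter.mp hmemU ⟨i, hti⟩
        simp only [Set.mem_setOf_eq] at h3
        exact le_of_lt h3
    have hp1 : v + δ • d ∈ P := hmemP δ (Or.inl rfl)
    have hp2 : v + (-δ) • d ∈ P := hmemP (-δ) (Or.inr rfl)
    have hsum : g (v + δ • d) + g (v + (-δ) • d) = 2 * g v := by
      simp only [map_add, map_smul, smul_eq_mul]
      ring
    have hle1 := hgmax _ hp1
    have hle2 := hgmax _ hp2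
    have heq1 : g (v + δ • d) = g v := by linarith
    have := hgstrict _ hp1 heq1
    have hδd0 : δ • d = 0 := by
      have h : v + δ • d = v := this
      simpa using h
    have : d = 0 := by
      rcases smul_eq_zero.mp hδd0 with h | h
      · exact absurd h (ne_of_gt hδpos)
      · exact h
    exact hd0 this
  have himg : ((fun v => {i | ∑ j, a i j * v j = b i} : (Fin D → ℝ) → Set (Fin n)) ''
      {v | IsVertex P v}).Finite := Set.toFinite _
  exact Set.Finite.of_finite_image himg hinj

theorem unique_low_vertex (D n : ℕ) (hD : 1 ≤ D)
    (a : Fin n → Fin D → ℝ) (b : Fin n → ℝ) (ha : ∀ i, a i ≠ 0)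
    (P : Set (Fin D → ℝ)) (hP : P = ⋂ i, {x | ∑ j, a i j * x j ≤ b i})
    (hfull : affineSpan ℝ P = ⊤)
    (hpointed : ∃ v, IsVertex P v)
    (l : (Fin D → ℝ) →ₗ[ℝ] ℝ) (B : ℝ)
    (hminB : ∃ m ∈ P, (∀ x ∈ P, l m ≤ l x) ∧ l m < B)
    (hdim : ∀ f, IsFace P f → (∀ x ∈ f, l x < B) → faceDim f ≤ 0) :
    ∃! v, IsVertex P v ∧ l v < B := by
  obtain ⟨m, hmP, hmmin, hmB⟩ := hminB
  have hcont : ∀ i : Fin n, Continuous (fun x : Fin D → ℝ => ∑ j, a i j * x j) := fun i =>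
    continuous_finset_sum _ (fun j _ => continuous_const.mul (continuous_apply j))
  have hPc : IsClosed P := by
    rw [hP]; exact isClosed_iInter (fun i => isClosed_le (hcont i) continuous_const)
  have hlin : ∀ i : Fin n, IsLinearMap ℝ (fun x : Fin D → ℝ => ∑ j, a i j * x j) := by
    intro i
    constructor
    · intro x y; simp [Pi.add_apply, mul_add, Finset.sum_add_distrib]
    · intro c x; simp [Pi.smul_apply, smul_eq_mul, Finset.mul_sum, mul_left_comm]
  have hPconv : Convex ℝ P := by
    rw [hP]
    exact convex_iInter (fun i => convex_halfSpace_le (hlin i) (b i))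
  -- existence: the argmin face of l is the singleton {m}
  have hmF₀ : m ∈ {x ∈ P | ∀ y ∈ P, (-l) y ≤ (-l) x} :=
    ⟨hmP, fun y hy => by simpa using hmmin y hy⟩
  have hF₀face : IsFace P {x ∈ P | ∀ y ∈ P, (-l) y ≤ (-l) x} := Or.inr (Or.inr ⟨-l, rfl⟩)
  have hF₀low : ∀ x ∈ {x ∈ P | ∀ y ∈ P, (-l) y ≤ (-l) x}, l x < B := by
    rintro x ⟨hxP, hxm⟩
    have h1 := hxm m hmP
    simp only [LinearMap.neg_apply, neg_le_neg_iff] at h1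
    linarith
  have hF₀dim := hdim _ hF₀face hF₀low
  have hF₀eq : {x ∈ P | ∀ y ∈ P, (-l) y ≤ (-l) x} = {m} := by
    ext x
    constructor
    · intro hx; exact face_subsingleton hF₀dim hx hmF₀
    · intro hx; rw [Set.mem_singleton_iff] at hx; rw [hx]; exact hmF₀
  have hmvert : IsVertex P m := Or.inr (Or.inr ⟨-l, hF₀eq.symm⟩)
  refine ⟨m, ⟨hmvert, hmB⟩, ?_⟩
  rintro v ⟨hvvert, hvB⟩
  by_contra hne
  -- finite set of low vertices other than m; pick one minimizing l
  have hSfin : {u | IsVertex P u ∧ l u < B ∧ u ≠ m}.Finite :=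
    (vertices_finite hD a b P hP hfull).subset (fun u hu => hu.1)
  have hSne : {u | IsVertex P u ∧ l u < B ∧ u ≠ m}.Nonempty := ⟨v, hvvert, hvB, hne⟩
  obtain ⟨u, ⟨huvert, huB, hum⟩, humin⟩ :=
    Set.exists_min_image {u | IsVertex P u ∧ l u < B ∧ u ≠ m} l hSfin hSne
  obtain ⟨huP, g, hgmax, hgstrict⟩ := vertex_expose hD hfull huvert
  have hlmu : l m < l u := by
    rcases lt_or_eq_of_le (hmmin u huP) with h | h
    · exact h
    · exfalso
      apply hum
      have hu0 : u ∈ {x ∈ P | ∀ y ∈ P, (-l) y ≤ (-l) x} := by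
        refine ⟨huP, fun y hy => ?_⟩
        simp only [LinearMap.neg_apply, neg_le_neg_iff]
        rw [← h]
        exact hmmin y hy
      rw [hF₀eq] at hu0
      exact hu0
  have hgmu : g m < g u := by
    rcases lt_or_eq_of_le (hgmax m hmP) with h | h
    · exact h
    · exact absurd (hgstrict m hmP h) (fun hh => hum hh.symm)
  set ε₀ : ℝ := (g u - g m) / (l u - l m) with hε₀def
  have hε₀ : 0 < ε₀ := div_pos (by linarith) (by linarith)
  set q : (Fin D → ℝ) →ₗ[ℝ] ℝ := g - ε₀ • l with hqdef
  have happ : ∀ x, q x = g x - ε₀ * l x := fun x => by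
    simp [hqdef, LinearMap.sub_apply, LinearMap.smul_apply, smul_eq_mul]
  have hkey : ε₀ * (l u - l m) = g u - g m := by
    rw [hε₀def]; exact div_mul_cancel₀ _ (by linarith)
  have hqum : q u = q m := by
    rw [happ, happ]; nlinarith [hkey]
  -- compact region and attainment
  have hKb : Bornology.IsBounded {x ∈ P | g m ≤ g x} :=
    bounded_of_exposed hPc hPconv huP hgmax hgstrict (g m)
  have hKc : IsClosed {x ∈ P | g m ≤ g x} := by
    have heq : {x ∈ P | g m ≤ g x} = P ∩ {x | g m ≤ g x} := rfl
    rw [heq]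
    exact hPc.inter (isClosed_le continuous_const g.continuous_of_finiteDimensional)
  have hKcompact : IsCompact {x ∈ P | g m ≤ g x} :=
    Metric.isCompact_of_isClosed_isBounded hKc hKb
  have huK : u ∈ {x ∈ P | g m ≤ g x} := ⟨huP, le_of_lt hgmu⟩
  have hmK : m ∈ {x ∈ P | g m ≤ g x} := ⟨hmP, le_refl _⟩
  obtain ⟨z, hzK, hzmax⟩ := hKcompact.exists_isMaxOn ⟨u, huK⟩
    (q.continuous_of_finiteDimensional.continuousOn)
  have hzP : z ∈ P := hzK.1
  have hzmaxP : ∀ x ∈ P, q x ≤ q z := by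
    intro x hxP
    by_cases hc : g m ≤ g x
    · exact hzmax ⟨hxP, hc⟩
    · push_neg at hc
      have h1 : q x < q m := by
        rw [happ, happ]
        have h2 := hmmin x hxP
        nlinarith
      exact le_of_lt (lt_of_lt_of_le h1 (hzmax hmK))
  have hzF : z ∈ {x ∈ P | ∀ y ∈ P, q y ≤ q x} := ⟨hzP, hzmaxP⟩
  have hFface : IsFace P {x ∈ P | ∀ y ∈ P, q y ≤ q x} := Or.inr (Or.inr ⟨q, rfl⟩)
  have hFle : ∀ x ∈ {x ∈ P | ∀ y ∈ P, q y ≤ q x}, l x ≤ l u := by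
    rintro x ⟨hxP, hxmax⟩
    have h1 := hxmax u huP
    rw [happ, happ] at h1
    have h2 := hgmax x hxP
    nlinarith
  have hFlow : ∀ x ∈ {x ∈ P | ∀ y ∈ P, q y ≤ q x}, l x < B :=
    fun x hx => lt_of_le_of_lt (hFle x hx) huB
  have hFdim := hdim _ hFface hFlow
  have hFeq : {x ∈ P | ∀ y ∈ P, q y ≤ q x} = {z} := by
    ext x
    constructor
    · intro hx; exact face_subsingleton hFdim hx hzF
    · intro hx; rw [Set.mem_singleton_iff] at hx; rw [hx]; exact hzF
  have hzvert : IsVertex P z := Or.inr (Or.inr ⟨q, hFeq.symm⟩)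
  have hzB : l z < B := hFlow z hzF
  by_cases hzm : z = m
  · have huF : u ∈ {x ∈ P | ∀ y ∈ P, q y ≤ q x} := by
      refine ⟨huP, fun y hy => ?_⟩
      calc q y ≤ q z := hzmaxP y hy
        _ = q m := by rw [hzm]
        _ = q u := hqum.symm
    rw [hFeq, Set.mem_singleton_iff] at huF
    exact hum (huF.trans hzm)
  · have hzS : z ∈ {u | IsVertex P u ∧ l u < B ∧ u ≠ m} := ⟨hzvert, hzB, hzm⟩
    have hlz : l z = l u := le_antisymm (hFle z hzF) (humin z hzS)
    have hgz : g z = g u := by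
      have h1 : q u ≤ q z := hzmax huK
      rw [happ, happ] at h1
      have h2 := hgmax z hzP
      rw [hlz] at h1
      linarith
    have hzu : z = u := hgstrict z hzP hgz
    have hmF : m ∈ {x ∈ P | ∀ y ∈ P, q y ≤ q x} := by
      refine ⟨hmP, fun y hy => ?_⟩
      calc q y ≤ q z := hzmaxP y hy
        _ = q u := by rw [hzu]
        _ = q m := hqum
    rw [hFeq, Set.mem_singleton_iff] at hmF
    apply hum
    rw [← hzu]
    exact hmF.symm
end

section
/- Let D ≥ 2 and let C ⊆ ℝ^D be the polyhedron defined by the 2(D−1) halfspace inequalities x_i ≥ 0 and x_i ≤ x_D for i = 1,…,D−1 (the cone over a (D−1)-dimensional hypercube). Then C has exactly one vertex, namely the origin, and the total number of faces of C, counting the empty face and C itself, is exactly 3^{D−1} + 2. -/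
open Set Classical

namespace ConeCube
variable {n : ℕ}

noncomputable def lf (n : ℕ) (c : Fin (n+2) → ℝ) : (Fin (n+2) → ℝ) →ₗ[ℝ] ℝ where
  toFun x := ∑ j, c j * x j
  map_add' x y := by simp [mul_add, Finset.sum_add_distrib]
  map_smul' r x := by simp [Finset.mul_sum, mul_left_comm]

@[simp] lemma lf_apply (c x : Fin (n+2) → ℝ) : lf n c x = ∑ j, c j * x j := rfl

def Cn (n : ℕ) : Set (Fin (n+2) → ℝ) :=
  {x | ∀ i : Fin (n+1), 0 ≤ x i.castSucc ∧ x i.castSucc ≤ x (Fin.last (n+1))}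

lemma zero_mem : (0 : Fin (n+2) → ℝ) ∈ Cn n := fun _ => by simp

lemma smul_mem {x} (hx : x ∈ Cn n) {t : ℝ} (ht : 0 ≤ t) : t • x ∈ Cn n := by
  intro i
  simp only [Pi.smul_apply, smul_eq_mul]
  exact ⟨mul_nonneg ht (hx i).1, mul_le_mul_of_nonneg_left (hx i).2 ht⟩

lemma last_nonneg {x} (hx : x ∈ Cn n) : 0 ≤ x (Fin.last (n+1)) :=
  le_trans (hx 0).1 (hx 0).2

def Fs (n : ℕ) (s : Fin (n+1) → Fin 3) : Set (Fin (n+2) → ℝ) :=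
  {x | x ∈ Cn n ∧ ∀ i, (s i = 0 → x i.castSucc = 0) ∧
      (s i = 1 → x i.castSucc = x (Fin.last (n+1)))}

noncomputable def pt (n : ℕ) (s : Fin (n+1) → Fin 3) : Fin (n+2) → ℝ :=
  Fin.snoc (fun i => if s i = 0 then 0 else if s i = 1 then 1 else 1/2) 1

@[simp] lemma pt_last (s : Fin (n+1) → Fin 3) : pt n s (Fin.last (n+1)) = 1 :=
  Fin.snoc_last _ _

@[simp] lemma pt_castSucc (s : Fin (n+1) → Fin 3) (i : Fin (n+1)) :
    pt n s i.castSucc = if s i = 0 then 0 else if s i = 1 then 1 else 1/2 :=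
  Fin.snoc_castSucc _ _ _

lemma pt_mem (s : Fin (n+1) → Fin 3) : pt n s ∈ Fs n s := by
  refine ⟨fun i => ?_, fun i => ⟨fun h => ?_, fun h => ?_⟩⟩
  · simp only [pt_castSucc, pt_last]
    split_ifs <;> norm_num
  · simp [h]
  · have h0 : s i ≠ 0 := by rw [h]; decide
    simp [h, h0]

lemma smul2_mem_Fs {s : Fin (n+1) → Fin 3} {x} (hx : x ∈ Fs n s) :
    (2:ℝ) • x ∈ Fs n s := by
  refine ⟨smul_mem hx.1 (by norm_num), fun i => ⟨fun h => ?_, fun h => ?_⟩⟩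
  · simp [(hx.2 i).1 h]
  · simp [(hx.2 i).2 h]

noncomputable def cs (n : ℕ) (s : Fin (n+1) → Fin 3) : Fin (n+2) → ℝ :=
  Fin.snoc (fun i => if s i = 0 then (-1:ℝ) else if s i = 1 then 1 else 0)
    (-(∑ i, if s i = 1 then (1:ℝ) else 0))

lemma lf_cs_eq (s : Fin (n+1) → Fin 3) (x : Fin (n+2) → ℝ) :
    lf n (cs n s) x = ∑ i : Fin (n+1),
      (if s i = 0 then -(x i.castSucc) else
        if s i = 1 then x i.castSucc - x (Fin.last (n+1)) else 0) := by
  rw [lf_apply, Fin.sum_univ_castSucc]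
  simp only [cs, Fin.snoc_castSucc, Fin.snoc_last]
  rw [neg_mul, Finset.sum_mul, ← Finset.sum_neg_distrib, ← Finset.sum_add_distrib]
  refine Finset.sum_congr rfl (fun i _ => ?_)
  have tri : ∀ a : Fin 3, a = 0 ∨ a = 1 ∨ a = 2 := by decide
  rcases tri (s i) with h|h|h <;> simp [h] <;> ring

lemma term_nonpos {x} (hx : x ∈ Cn n) (s : Fin (n+1) → Fin 3) (i : Fin (n+1)) :
    (if s i = 0 then -(x i.castSucc) else
        if s i = 1 then x i.castSucc - x (Fin.last (n+1)) else 0) ≤ 0 := by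
  split_ifs
  · exact neg_nonpos.mpr (hx i).1
  · exact sub_nonpos.mpr (hx i).2
  · exact le_refl 0

lemma Fs_exposed (s : Fin (n+1) → Fin 3) :
    Fs n s = {x ∈ Cn n | ∀ y ∈ Cn n, lf n (cs n s) y ≤ lf n (cs n s) x} := by
  ext x
  constructor
  · rintro ⟨hxC, hcond⟩
    have hx0 : lf n (cs n s) x = 0 := by
      rw [lf_cs_eq]
      refine Finset.sum_eq_zero (fun i _ => ?_)
      split_ifs with h1 h2
      · rw [(hcond i).1 h1]; ring
      · rw [(hcond i).2 h2]; ring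
      · rfl
    exact ⟨hxC, fun y hy => by
      rw [hx0, lf_cs_eq]
      exact Finset.sum_nonpos (fun i _ => term_nonpos hy s i)⟩
  · rintro ⟨hxC, hmax⟩
    have h1 : lf n (cs n s) x ≤ 0 := by
      rw [lf_cs_eq]; exact Finset.sum_nonpos (fun i _ => term_nonpos hxC s i)
    have h2 : (0:ℝ) ≤ lf n (cs n s) x := by
      have := hmax 0 zero_mem
      simpa using this
    have h0 : lf n (cs n s) x = 0 := le_antisymm h1 h2
    rw [lf_cs_eq] at h0
    have hall := (Finset.sum_eq_zero_iff_of_nonpos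
      (fun i _ => term_nonpos hxC s i)).mp h0
    refine ⟨hxC, fun i => ⟨fun hz => ?_, fun ho => ?_⟩⟩
    · have := hall i (Finset.mem_univ i)
      rw [if_pos hz] at this
      linarith
    · have := hall i (Finset.mem_univ i)
      have hz : s i ≠ 0 := by rw [ho]; decide
      rw [if_neg hz, if_pos ho] at this
      linarith

section classify
variable (l : (Fin (n+2) → ℝ) →ₗ[ℝ] ℝ)

noncomputable def cP (i : Fin (n+1)) : ℝ := l (fun k => if i.castSucc = k then 1 else 0)
noncomputable def dP : ℝ := l (fun k => if Fin.last (n+1) = k then 1 else 0)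
noncomputable def MP : ℝ := (∑ i, max (cP l i) 0) + dP l

noncomputable def gP (i : Fin (n+1)) (x : Fin (n+2) → ℝ) : ℝ :=
  if 0 < cP l i then cP l i * (x i.castSucc - x (Fin.last (n+1)))
  else cP l i * x i.castSucc

lemma expand (x : Fin (n+2) → ℝ) :
    l x = (∑ i, gP l i x) + MP l * x (Fin.last (n+1)) := by
  rw [LinearMap.pi_apply_eq_sum_univ l x, Fin.sum_univ_castSucc]
  have key : ∀ i : Fin (n+1),
      x i.castSucc • l (fun k => if i.castSucc = k then 1 else 0)
        = gP l i x + max (cP l i) 0 * x (Fin.last (n+1)) := by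
    intro i
    rcases lt_or_ge 0 (cP l i) with h | h
    · rw [gP, if_pos h, max_eq_left h.le]; simp [cP, smul_eq_mul]; ring
    · rw [gP, if_neg (not_lt.mpr h), max_eq_right h]; simp [cP, smul_eq_mul]; ring
  rw [Finset.sum_congr rfl (fun i _ => key i), Finset.sum_add_distrib, MP,
    add_mul, Finset.sum_mul]
  simp only [smul_eq_mul]
  rw [← dP]
  ring

lemma gP_nonpos {x} (hx : x ∈ Cn n) (i : Fin (n+1)) : gP l i x ≤ 0 := by
  rw [gP]
  split_ifs with h
  · exact mul_nonpos_of_nonneg_of_nonpos h.le (sub_nonpos.mpr (hx i).2)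
  · exact mul_nonpos_of_nonpos_of_nonneg (not_lt.mp h) (hx i).1

lemma MP_nonpos (hneg : ∀ y ∈ Cn n, l y ≤ 0) : MP l ≤ 0 := by
  set q : Fin (n+2) → ℝ := Fin.snoc (fun i => if 0 < cP l i then (1:ℝ) else 0) 1 with hq
  have hqC : q ∈ Cn n := by
    intro i
    simp only [hq, Fin.snoc_castSucc, Fin.snoc_last]
    split_ifs <;> norm_num
  have : l q = MP l := by
    rw [expand]
    have : ∀ i : Fin (n+1), gP l i q = 0 := by
      intro i
      rw [gP]
      simp only [hq, Fin.snoc_castSucc, Fin.snoc_last]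
      split_ifs with h <;> simp
    rw [Finset.sum_congr rfl (fun i _ => this i)]
    simp [hq, Fin.snoc_last]
  rw [← this]
  exact hneg q hqC

lemma eq_zero_of_last_eq_zero {x} (hx : x ∈ Cn n) (h : x (Fin.last (n+1)) = 0) :
    x = 0 := by
  funext j
  induction j using Fin.lastCases with
  | last => simpa using h
  | cast i =>
    have h1 := (hx i).1
    have h2 := (hx i).2
    rw [h] at h2
    simpa using le_antisymm h2 h1

lemma classify (f : Set (Fin (n+2) → ℝ)) (hf : IsFace (Cn n) f) :
    f = ∅ ∨ f = {0} ∨ ∃ s, f = Fs n s := by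
  rcases hf with h | h | ⟨l, h⟩
  · exact Or.inl h
  · refine Or.inr (Or.inr ⟨fun _ => 2, ?_⟩)
    rw [h]
    ext x
    simp only [Fs, mem_setOf_eq]
    exact ⟨fun hx => ⟨hx, fun i => ⟨fun h0 => absurd h0 (by decide),
      fun h1 => absurd h1 (by decide)⟩⟩, fun hx => hx.1⟩
  · by_cases hne : f = ∅
    · exact Or.inl hne
    obtain ⟨x₀, hx₀⟩ := Set.nonempty_iff_ne_empty.mpr hne
    rw [h] at hx₀
    obtain ⟨hx₀C, hmax⟩ := hx₀
    have hl0 : l x₀ = 0 := by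
      have le1 : l ((2:ℝ) • x₀) ≤ l x₀ := hmax _ (smul_mem hx₀C (by norm_num))
      rw [map_smul, smul_eq_mul] at le1
      have le2 : l 0 ≤ l x₀ := hmax 0 zero_mem
      rw [map_zero] at le2
      linarith
    have hneg : ∀ y ∈ Cn n, l y ≤ 0 := fun y hy => hl0 ▸ hmax y hy
    have hchar : f = {x | x ∈ Cn n ∧ l x = 0} := by
      rw [h]
      ext x
      constructor
      · rintro ⟨hxC, hm⟩
        exact ⟨hxC, le_antisymm (hneg x hxC) (hl0 ▸ hm x₀ hx₀C)⟩
      · rintro ⟨hxC, hx0⟩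
        exact ⟨hxC, fun y hy => hx0 ▸ hneg y hy⟩
    have hM : MP l ≤ 0 := MP_nonpos l hneg
    rcases hM.lt_or_eq with hMlt | hMeq
    · refine Or.inr (Or.inl ?_)
      rw [hchar]
      ext x
      simp only [mem_setOf_eq, mem_singleton_iff]
      constructor
      · rintro ⟨hxC, hx0⟩
        rw [expand] at hx0
        have hs : (∑ i, gP l i x) ≤ 0 := Finset.sum_nonpos (fun i _ => gP_nonpos l hxC i)
        have hm : MP l * x (Fin.last (n+1)) ≤ 0 :=
          mul_nonpos_of_nonpos_of_nonneg hM (last_nonneg hxC)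
        have hlast : x (Fin.last (n+1)) = 0 := by
          have hmz : MP l * x (Fin.last (n+1)) = 0 := by linarith
          rcases mul_eq_zero.mp hmz with h' | h'
          · exact absurd h' hMlt.ne
          · exact h'
        exact eq_zero_of_last_eq_zero hxC hlast
      · rintro rfl
        exact ⟨zero_mem, by rw [expand]; simp [gP]⟩
    · refine Or.inr (Or.inr ⟨fun i => if 0 < cP l i then 1 else if cP l i < 0 then 0 else 2, ?_⟩)
      rw [hchar]
      ext x
      simp only [Fs, mem_setOf_eq]
      constructor
      · rintro ⟨hxC, hx0⟩
        rw [expand, hMeq] at hx0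
        simp only [zero_mul, add_zero] at hx0
        have hall := (Finset.sum_eq_zero_iff_of_nonpos
          (fun i _ => gP_nonpos l hxC i)).mp hx0
        refine ⟨hxC, fun i => ⟨fun h0 => ?_, fun h1 => ?_⟩⟩
        · have hc : cP l i < 0 := by
            by_cases hp : 0 < cP l i
            · rw [if_pos hp] at h0; exact absurd h0 (by decide)
            · by_cases hn : cP l i < 0
              · exact hn
              · rw [if_neg hp, if_neg hn] at h0; exact absurd h0 (by decide)
          have := hall i (Finset.mem_univ i)
          rw [gP, if_neg (not_lt.mpr hc.le)] at this
          rcases mul_eq_zero.mp this with h' | h'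
          · exact absurd h' hc.ne
          · exact h'
        · have hc : 0 < cP l i := by
            by_contra hp
            rw [if_neg hp] at h1
            split_ifs at h1 <;> exact absurd h1 (by decide)
          have := hall i (Finset.mem_univ i)
          rw [gP, if_pos hc] at this
          rcases mul_eq_zero.mp this with h' | h'
          · exact absurd h' hc.ne'
          · linarith [sub_eq_zero.mp h']
      · rintro ⟨hxC, hcond⟩
        refine ⟨hxC, ?_⟩
        rw [expand, hMeq]
        simp only [zero_mul, add_zero]
        refine Finset.sum_eq_zero (fun i _ => ?_)
        rw [gP]
        split_ifs with hp
        · have := (hcond i).2 (by rw [if_pos hp])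
          rw [this]; ring
        · rcases lt_or_ge (cP l i) 0 with hn | hz
          · have := (hcond i).1 (by rw [if_neg hp, if_pos hn])
            rw [this]; ring
          · have : cP l i = 0 := le_antisymm (not_lt.mp hp) hz
            rw [this]; ring

end classify

lemma Fs_inj : Function.Injective (Fs n) := by
  intro s s' hss
  have key : ∀ (a b : Fin (n+1) → Fin 3), Fs n a = Fs n b →
      ∀ i, (b i = 0 → a i = 0) ∧ (b i = 1 → a i = 1) := by
    intro a b hab i
    have hmem : pt n a ∈ Fs n b := hab ▸ pt_mem a
    have tri : ∀ c : Fin 3, c = 0 ∨ c = 1 ∨ c = 2 := by decide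
    constructor
    · intro h0
      have := (hmem.2 i).1 h0
      rw [pt_castSucc] at this
      rcases tri (a i) with h|h|h
      · exact h
      · rw [h] at this; norm_num at this
      · have h1 : a i ≠ 0 := by rw [h]; decide
        have h2 : a i ≠ 1 := by rw [h]; decide
        rw [if_neg h1, if_neg h2] at this; norm_num at this
    · intro h1
      have := (hmem.2 i).2 h1
      rw [pt_castSucc, pt_last] at this
      rcases tri (a i) with h|h|h
      · rw [h] at this; norm_num at this
      · exact h
      · have h1' : a i ≠ 0 := by rw [h]; decide
        have h2 : a i ≠ 1 := by rw [h]; decide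
        rw [if_neg h1', if_neg h2] at this; norm_num at this
  funext i
  have fact : ∀ a b : Fin 3, ((b = 0 → a = 0) ∧ (b = 1 → a = 1)) →
      ((a = 0 → b = 0) ∧ (a = 1 → b = 1)) → a = b := by decide
  exact fact (s i) (s' i) (key s s' hss i) (key s' s hss.symm i)

lemma zero_is_face : IsFace (Cn n) ({0} : Set (Fin (n+2) → ℝ)) := by
  refine Or.inr (Or.inr ⟨lf n (Fin.snoc 0 (-1)), ?_⟩)
  have hl : ∀ x : Fin (n+2) → ℝ, lf n (Fin.snoc 0 (-1)) x = -(x (Fin.last (n+1))) := by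
    intro x
    rw [lf_apply, Fin.sum_univ_castSucc]
    simp [Fin.snoc_castSucc, Fin.snoc_last]
  ext x
  simp only [mem_singleton_iff, mem_setOf_eq]
  constructor
  · rintro rfl
    refine ⟨zero_mem, fun y hy => ?_⟩
    rw [hl, hl]
    simp [neg_nonpos, last_nonneg hy]
  · rintro ⟨hxC, hmax⟩
    have := hmax 0 zero_mem
    rw [hl, hl] at this
    simp only [Pi.zero_apply, neg_zero] at this
    have hlast : x (Fin.last (n+1)) = 0 :=
      le_antisymm (by linarith) (last_nonneg hxC)
    exact eq_zero_of_last_eq_zero hxC hlast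

lemma faces_eq :
    {f : Set (Fin (n+2) → ℝ) | IsFace (Cn n) f}
      = insert ∅ (insert {0} (Set.range (Fs n))) := by
  ext f
  simp only [mem_setOf_eq, mem_insert_iff, Set.mem_range]
  constructor
  · intro hf
    rcases classify f hf with h | h | ⟨s, h⟩
    · exact Or.inl h
    · exact Or.inr (Or.inl h)
    · exact Or.inr (Or.inr ⟨s, h.symm⟩)
  · rintro (rfl | rfl | ⟨s, rfl⟩)
    · exact Or.inl rfl
    · exact zero_is_face
    · exact Or.inr (Or.inr ⟨lf n (cs n s), Fs_exposed s⟩)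

lemma empty_not_mem : (∅ : Set (Fin (n+2) → ℝ)) ∉
    insert ({0} : Set (Fin (n+2) → ℝ)) (Set.range (Fs n)) := by
  simp only [mem_insert_iff, Set.mem_range, not_or]
  constructor
  · intro h
    exact absurd (h ▸ rfl : (0 : Fin (n+2) → ℝ) ∈ (∅ : Set (Fin (n+2) → ℝ)))
      (notMem_empty _)
  · rintro ⟨s, hs⟩
    exact absurd (hs ▸ pt_mem s) (notMem_empty _)

lemma zero_notMem_range : ({0} : Set (Fin (n+2) → ℝ)) ∉ Set.range (Fs n) := by
  rintro ⟨s, hs⟩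
  have h1 : pt n s ∈ ({0} : Set (Fin (n+2) → ℝ)) := hs ▸ pt_mem s
  have h2 : pt n s = 0 := h1
  have := congrFun h2 (Fin.last (n+1))
  rw [pt_last] at this
  norm_num at this

lemma main (n : ℕ) :
    (IsVertex (Cn n) 0 ∧ ∀ v, IsVertex (Cn n) v → v = 0) ∧
    {f : Set (Fin (n+2) → ℝ) | IsFace (Cn n) f}.Finite ∧
    {f : Set (Fin (n+2) → ℝ) | IsFace (Cn n) f}.ncard = 3 ^ (n+1) + 2 := by
  refine ⟨⟨zero_is_face, fun v hv => ?_⟩, ?_, ?_⟩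
  · rcases classify {v} hv with h | h | ⟨s, h⟩
    · exact absurd h (Set.singleton_ne_empty v)
    · exact Set.singleton_eq_singleton_iff.mp h
    · exfalso
      have h1 : pt n s ∈ ({v} : Set (Fin (n+2) → ℝ)) := h ▸ pt_mem s
      have h2 : (2:ℝ) • pt n s ∈ ({v} : Set (Fin (n+2) → ℝ)) :=
        h ▸ smul2_mem_Fs (pt_mem s)
      have h3 : (2:ℝ) • pt n s = pt n s := by
        rw [Set.mem_singleton_iff] at h1 h2
        exact h2.trans h1.symm
      have := congrFun h3 (Fin.last (n+1))
      simp only [Pi.smul_apply, pt_last, smul_eq_mul] at this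
      norm_num at this
  · rw [faces_eq]
    exact ((Set.finite_range _).insert _).insert _
  · rw [faces_eq]
    have hfin : (insert ({0} : Set (Fin (n+2) → ℝ)) (Set.range (Fs n))).Finite :=
      (Set.finite_range _).insert _
    rw [Set.ncard_insert_of_notMem empty_not_mem hfin,
      Set.ncard_insert_of_notMem zero_notMem_range (Set.finite_range _)]
    have : (Set.range (Fs n)).ncard = 3 ^ (n+1) := by
      rw [← Set.image_univ, Set.ncard_image_of_injective _ Fs_inj, Set.ncard_univ]
      simp [Nat.card_eq_fintype_card]
    rw [this]

end ConeCube

theorem cone_over_cube (D : ℕ) (hD : 2 ≤ D)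
    (C : Set (Fin D → ℝ))
    (hC : C = {x | ∀ i : Fin D, (i : ℕ) < D - 1 →
      0 ≤ x i ∧ x i ≤ x ⟨D - 1, by omega⟩}) :
    (IsVertex C 0 ∧ ∀ v, IsVertex C v → v = 0) ∧
    {f : Set (Fin D → ℝ) | IsFace C f}.Finite ∧
    {f : Set (Fin D → ℝ) | IsFace C f}.ncard = 3 ^ (D - 1) + 2 := by
  obtain ⟨n, rfl⟩ : ∃ n, D = n + 2 := ⟨D - 2, by omega⟩
  have hC' : C = ConeCube.Cn n := by
    rw [hC]
    ext x
    simp only [ConeCube.Cn, mem_setOf_eq]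
    constructor
    · intro h i
      exact h i.castSucc (by simpa using i.isLt)
    · intro h j hj
      have hj' : (j : ℕ) < n + 1 := by omega
      exact h ⟨j, hj'⟩
  rw [hC']
  have : n + 2 - 1 = n + 1 := rfl
  rw [this]
  exact ConeCube.main n
end

section
/- Let P ⊆ ℝ^D be a polyhedron and let f be a nonempty bounded face of P of dimension k. Then there exists a set W of at most k + 1 vertices of P, all contained in f, such that f = P ∩ aff(W), where aff(W) denotes the affine hull of W. -/
open Set Classical

/- A bounded face `f` is exposed, hence compact and convex, so by Krein–Milman its affine hull is
spanned by its extreme points, and an affinely independent spanning subset of them has at most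
`dim f + 1` elements. Extreme points of the face `f` are extreme in `P`, and an extreme point of a
polyhedron is a vertex. Finally `f = P ∩ aff f`, because the functional exposing `f` is constant
on `aff f`. -/

open Filter Topology

section Polyhedron

variable {V ι : Type*} [AddCommGroup V] [Module ℝ V] [Fintype ι]
  {l : ι → V →ₗ[ℝ] ℝ} {b : ι → ℝ} {v w : V}

theorem eventually_add_smul_mem_iInter_halfSpace (hv : v ∈ ⋂ i, {x | l i x ≤ b i})
    (hw : ∀ i, l i v = b i → l i w = 0) :
    ∀ᶠ t in 𝓝 (0 : ℝ), v + t • w ∈ ⋂ i, {x | l i x ≤ b i} := by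
  simp only [mem_iInter, mem_ofPred_eq, map_add, map_smul, smul_eq_mul] at hv ⊢
  refine eventually_all.2 fun i => ?_
  rcases (hv i).eq_or_lt with htight | hslack
  · exact Eventually.of_forall fun t => by rw [hw i htight, mul_zero, add_zero, htight]
  · have hcont : Continuous fun t : ℝ => l i v + t * l i w := by fun_prop
    exact (hcont.continuousAt.eventually_lt continuousAt_const (by simpa using hslack)).mono
      fun _ => le_of_lt

theorem eq_zero_of_mem_extremePoints_iInter_halfSpace
    (hv : v ∈ (⋂ i, {x | l i x ≤ b i}).extremePoints ℝ) (hw : ∀ i, l i v = b i → l i w = 0) :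
    w = 0 := by
  obtain ⟨ε, hε, hball⟩ :=
    Metric.eventually_nhds_iff.1 (eventually_add_smul_mem_iInter_halfSpace hv.1 hw)
  have hmem : ∀ t : ℝ, |t| < ε → v + t • w ∈ ⋂ i, {x | l i x ≤ b i} := fun t ht =>
    hball (by rwa [Real.dist_0_eq_abs])
  have hhalf : |ε / 2| < ε := by rw [abs_of_pos (half_pos hε)]; exact half_lt_self hε
  have hplus := hmem (ε / 2) hhalf
  have hminus : v - (ε / 2) • w ∈ ⋂ i, {x | l i x ≤ b i} := by
    simpa [sub_eq_add_neg, neg_smul] using hmem (-(ε / 2)) (by rwa [abs_neg])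
  simpa [(half_pos hε).ne'] using hv.2 hplus hminus (mem_openSegment_add_sub v _)

-- The sum of the constraints that are tight at `v` exposes `v`.
theorem isVertex_of_mem_extremePoints_iInter_halfSpace
    (hv : v ∈ (⋂ i, {x | l i x ≤ b i}).extremePoints ℝ) :
    IsVertex (⋂ i, {x | l i x ≤ b i}) v := by
  have hvP := hv.1
  simp only [mem_iInter, mem_ofPred_eq] at hvP
  set T := Finset.univ.filter fun i => l i v = b i
  have hlv : ∑ i ∈ T, l i v = ∑ i ∈ T, b i :=
    Finset.sum_congr rfl fun i hi => (Finset.mem_filter.1 hi).2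
  refine Or.inr (Or.inr ⟨∑ i ∈ T, l i, ?_⟩)
  ext x
  simp only [mem_singleton_iff, mem_ofPred_eq, mem_iInter, LinearMap.sum_apply]
  constructor
  · rintro rfl
    exact ⟨hvP, fun y hy => hlv ▸ Finset.sum_le_sum fun i _ => hy i⟩
  · rintro ⟨hxP, hxmax⟩
    have htight : ∀ i ∈ T, l i x = b i :=
      (Finset.sum_eq_sum_iff_of_le fun i _ => hxP i).1
        (le_antisymm (Finset.sum_le_sum fun i _ => hxP i) (hlv ▸ hxmax v hvP))
    refine (sub_eq_zero.1 (eq_zero_of_mem_extremePoints_iInter_halfSpace hv fun i hi => ?_))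
    have hiT : i ∈ T := Finset.mem_filter.2 ⟨Finset.mem_univ i, hi⟩
    rw [map_sub, htight i hiT, hi, sub_self]

end Polyhedron

theorem finrank_direction_affineSpan_eq_of_faceDim_eq {V : Type*} [AddCommGroup V] [Module ℝ V]
    {f : Set V} {k : ℕ} (hk : faceDim f = k) :
    Module.finrank ℝ (affineSpan ℝ f).direction = k := by
  unfold faceDim at hk
  split_ifs at hk
  exact_mod_cast hk

theorem IsFace.isExposed_s17 {E : Type*} [AddCommGroup E] [Module ℝ E] [TopologicalSpace E]
    [IsTopologicalAddGroup E] [ContinuousSMul ℝ E] [T2Space E] [FiniteDimensional ℝ E]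
    {P f : Set E} (hf : IsFace P f) : IsExposed ℝ P f := by
  rcases hf with rfl | rfl | ⟨l, rfl⟩
  · exact isExposed_empty
  · exact IsExposed.refl _
  · exact fun _ => ⟨LinearMap.toContinuousLinearMap l, rfl⟩

theorem IsExposed.eq_inter_affineSpan {𝕜 E : Type*} [Field 𝕜] [PartialOrder 𝕜]
    [TopologicalSpace 𝕜] [AddCommGroup E] [Module 𝕜 E] [TopologicalSpace E] {A B : Set E}
    (h : IsExposed 𝕜 A B) : B = A ∩ affineSpan 𝕜 B := by
  rcases B.eq_empty_or_nonempty with rfl | ⟨v, hv⟩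
  · simp
  obtain ⟨l, hl⟩ := h ⟨v, hv⟩
  refine (subset_inter h.subset (subset_affineSpan 𝕜 B)).antisymm ?_
  rintro x ⟨hxA, hxB⟩
  have hker : vectorSpan 𝕜 B ≤ LinearMap.ker (l : E →ₗ[𝕜] 𝕜) := by
    rw [vectorSpan_def, Submodule.span_le]
    rintro _ ⟨p, hp, q, hq, rfl⟩
    rw [hl] at hp hq
    simp [le_antisymm (hq.2 p hp.1) (hp.2 q hq.1)]
  have hlx : l x = l v := by
    have hxv := hker (direction_affineSpan 𝕜 B ▸
      AffineSubspace.vsub_mem_direction hxB (subset_affineSpan 𝕜 B hv))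
    simpa [sub_eq_zero] using hxv
  rw [hl] at hv ⊢
  exact ⟨hxA, fun y hy => hlx ▸ hv.2 y hy⟩

theorem IsCompact.affineSpan_extremePoints {E : Type*} [NormedAddCommGroup E]
    [NormedSpace ℝ E] [FiniteDimensional ℝ E] {K : Set E} (hK : IsCompact K) (hKc : Convex ℝ K) :
    affineSpan ℝ (K.extremePoints ℝ) = affineSpan ℝ K := by
  refine (affineSpan_mono ℝ extremePoints_subset).antisymm (affineSpan_le.2 fun x hx => ?_)
  rw [← closure_convexHull_extremePoints hK hKc] at hx
  exact closure_minimal (convexHull_subset_affineSpan _)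
    (affineSpan ℝ (K.extremePoints ℝ)).closed_of_finiteDimensional hx

theorem exists_finset_subset_affineSpan_eq_card_le (k : Type*) {V : Type*} [DivisionRing k]
    [AddCommGroup V] [Module k V] [FiniteDimensional k V] (s : Set V) :
    ∃ W : Finset V, ↑W ⊆ s ∧ affineSpan k ↑W = affineSpan k s ∧
      W.card ≤ Module.finrank k (affineSpan k s).direction + 1 := by
  obtain ⟨t, hts, hspan, hind⟩ := exists_affineIndependent k V s
  have htfin : t.Finite := finite_set_of_fin_dim_affineIndependent k hind
  have : Fintype t := htfin.fintype
  refine ⟨htfin.toFinset, by simpa using hts, by simpa using hspan, ?_⟩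
  have hcard := hind.card_le_finrank_succ
  rwa [Subtype.range_coe, ← direction_affineSpan, hspan, ← Set.toFinset_card,
    ← htfin.toFinset_eq_toFinset] at hcard

theorem bounded_face_affine_hull_general (D n : ℕ)
    (a : Fin n → Fin D → ℝ) (b : Fin n → ℝ)
    (P : Set (Fin D → ℝ)) (hP : P = ⋂ i, {x | ∑ j, a i j * x j ≤ b i})
    (f : Set (Fin D → ℝ)) (k : ℕ)
    (hf : IsFace P f) (hbdd : Bornology.IsBounded f)
    (hk : faceDim f = (k : ℤ)) :
    ∃ W : Finset (Fin D → ℝ), W.card ≤ k + 1 ∧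
      (∀ w ∈ W, IsVertex P w ∧ w ∈ f) ∧
      f = P ∩ (affineSpan ℝ (W : Set (Fin D → ℝ)) : Set (Fin D → ℝ)) := by
  set l : Fin n → (Fin D → ℝ) →ₗ[ℝ] ℝ := fun i => dotProductBilin ℝ ℝ (a i)
  replace hP : P = ⋂ i, {x | l i x ≤ b i} := hP
  have hPclosed : IsClosed P := hP ▸ isClosed_iInter fun i =>
    isClosed_le (l i).continuous_of_finiteDimensional continuous_const
  have hPconv : Convex ℝ P :=
    hP ▸ convex_iInter fun i => convex_halfSpace_le (l i).isLinear (b i)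
  have hexp : IsExposed ℝ P f := hf.isExposed_s17
  have hfK : IsCompact f := Metric.isCompact_of_isClosed_isBounded (hexp.isClosed hPclosed) hbdd
  have hspan := hfK.affineSpan_extremePoints (hexp.convex hPconv)
  obtain ⟨W, hWext, hWspan, hWcard⟩ :=
    exists_finset_subset_affineSpan_eq_card_le ℝ (f.extremePoints ℝ)
  refine ⟨W, ?_, fun w hw => ⟨?_, extremePoints_subset (hWext hw)⟩, ?_⟩
  · rwa [hspan, finrank_direction_affineSpan_eq_of_faceDim_eq hk] at hWcard
  · rw [hP] at hexp ⊢
    exact isVertex_of_mem_extremePoints_iInter_halfSpace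
      (hexp.isExtreme.extremePoints_subset_extremePoints (hWext hw))
  · rw [hWspan, hspan]
    exact hexp.eq_inter_affineSpan

theorem bounded_face_affine_hull (D n : ℕ)
    (a : Fin n → Fin D → ℝ) (b : Fin n → ℝ) (ha : ∀ i, a i ≠ 0)
    (P : Set (Fin D → ℝ)) (hP : P = ⋂ i, {x | ∑ j, a i j * x j ≤ b i})
    (f : Set (Fin D → ℝ)) (k : ℕ)
    (hf : IsFace P f) (hne : f.Nonempty) (hbdd : Bornology.IsBounded f)
    (hk : faceDim f = (k : ℤ)) :
    ∃ W : Finset (Fin D → ℝ), W.card ≤ k + 1 ∧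
      (∀ w ∈ W, IsVertex P w ∧ w ∈ f) ∧
      f = P ∩ (affineSpan ℝ (W : Set (Fin D → ℝ)) : Set (Fin D → ℝ)) :=
  bounded_face_affine_hull_general D n a b P hP f k hf hbdd hk
end

section
/- Let P ⊆ ℝ^D be a polytope (the convex hull of a finite set of points) with dim P = k ≥ 1, and let v be a vertex of P. Then P has a facet, i.e. a face of dimension k − 1, that does not contain v. -/
open Set Classical

section Helpers

set_option maxHeartbeats 1000000

open Module

variable {V : Type*} [AddCommGroup V] [Module ℝ V]

lemma sep_dual (U : Submodule ℝ V) {x : V} (hx : x ∉ U) :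
    ∃ g : V →ₗ[ℝ] ℝ, (∀ u ∈ U, g u = 0) ∧ g x = 1 := by
  obtain ⟨f, hfx, hf⟩ := U.exists_dual_map_eq_bot_of_notMem hx inferInstance
  refine ⟨(f x)⁻¹ • f, fun u hu => ?_, by simp [inv_mul_cancel₀ hfx]⟩
  have : f u ∈ U.map f := Submodule.mem_map_of_mem hu
  rw [hf, Submodule.mem_bot] at this
  simp [this]

lemma hull_le' (A : Set V) (l : V →ₗ[ℝ] ℝ) (M : ℝ) (h : ∀ s ∈ A, l s ≤ M) :
    ∀ x ∈ convexHull ℝ A, l x ≤ M :=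
  fun _ hx => convexHull_min h (convex_halfSpace_le l.isLinear M) hx

lemma hull_eq_const' (A : Set V) (l : V →ₗ[ℝ] ℝ) (M : ℝ) (h : ∀ s ∈ A, l s = M) :
    ∀ x ∈ convexHull ℝ A, l x = M :=
  fun _ hx => convexHull_min h (convex_hyperplane l.isLinear M) hx

lemma face_eq_hull' (S : Finset V) (hS : S.Nonempty) (l : V →ₗ[ℝ] ℝ) :
    {x ∈ convexHull ℝ (S : Set V) | ∀ y ∈ convexHull ℝ (S : Set V), l y ≤ l x}
      = convexHull ℝ (↑(S.filter fun s => l s = S.sup' hS l) : Set V) := by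
  set M := S.sup' hS l with hM
  obtain ⟨s₀, hs₀S, hs₀⟩ := S.exists_mem_eq_sup' hS l
  have hub : ∀ s ∈ S, l s ≤ M := fun s hs => Finset.le_sup' l hs
  have hhull_le : ∀ x ∈ convexHull ℝ (S : Set V), l x ≤ M := hull_le' _ l M hub
  ext x
  constructor
  · rintro ⟨hxP, hxmax⟩
    have hxM : l x = M :=
      le_antisymm (hhull_le x hxP)
        (by rw [hM, hs₀]; exact hxmax s₀ (subset_convexHull ℝ (S : Set V) hs₀S))
    rw [Finset.convexHull_eq] at hxP ⊢
    obtain ⟨w, hw0, hw1, hwx⟩ := hxP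
    have hlx : ∑ y ∈ S, w y * l y = M := by
      rw [← hxM, ← hwx, Finset.centerMass_eq_of_sum_1 _ _ hw1, map_sum]
      simp [smul_eq_mul]
    have hzero : ∀ y ∈ S, w y * (M - l y) = 0 := by
      rw [← Finset.sum_eq_zero_iff_of_nonneg
        (fun y hy => mul_nonneg (hw0 y hy) (sub_nonneg.mpr (hub y hy)))]
      have : ∑ y ∈ S, w y * (M - l y) = (∑ y ∈ S, w y) * M - ∑ y ∈ S, w y * l y := by
        rw [Finset.sum_mul, ← Finset.sum_sub_distrib]
        congr 1; ext y; ring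
      rw [this, hw1, hlx, one_mul, sub_self]
    have hwT : ∀ y ∈ S, y ∉ S.filter (fun s => l s = M) → w y = 0 := by
      intro y hy hyT
      rcases mul_eq_zero.mp (hzero y hy) with h | h
      · exact h
      · exact absurd (Finset.mem_filter.mpr ⟨hy, by linarith [sub_eq_zero.mp h]⟩) hyT
    refine ⟨w, fun y hy => hw0 y (Finset.mem_filter.mp hy).1, ?_, ?_⟩
    · rw [← hw1]
      exact (Finset.sum_subset (Finset.filter_subset _ _) hwT).symm ▸ rfl
    · rw [← hwx]
      exact (Finset.centerMass_subset id (Finset.filter_subset _ _) hwT).symm ▸ rfl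
  · intro hx
    have hxS : x ∈ convexHull ℝ (S : Set V) :=
      convexHull_mono (by exact_mod_cast Finset.filter_subset _ S) hx
    have hxM : l x = M := by
      refine hull_eq_const' _ l M (fun s hs => ?_) x hx
      rw [Finset.mem_coe, Finset.mem_filter] at hs
      exact hs.2
    exact ⟨hxS, fun y hy => hxM ▸ hhull_le y hy⟩

lemma vspan_le_ker (A : Set V) (l : V →ₗ[ℝ] ℝ) (M : ℝ) (h : ∀ s ∈ A, l s = M) :
    vectorSpan ℝ A ≤ LinearMap.ker l := by
  rw [vectorSpan_def, Submodule.span_le]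
  rintro x hx
  rw [Set.mem_vsub] at hx
  obtain ⟨a, ha, b, hb, rfl⟩ := hx
  simp [LinearMap.mem_ker, vsub_eq_sub, map_sub, h a ha, h b hb]

lemma argmax_dim_lt' [FiniteDimensional ℝ V] (S : Finset V) (hS : S.Nonempty) (v : V) (hv : v ∈ S)
    (l : V →ₗ[ℝ] ℝ) (hb : l v < S.sup' hS l) :
    finrank ℝ (affineSpan ℝ (↑(S.filter fun s => l s = S.sup' hS l) : Set V)).direction
      < finrank ℝ (affineSpan ℝ (S : Set V)).direction := by
  set M := S.sup' hS l with hM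
  obtain ⟨s₀, hs₀S, hs₀⟩ := S.exists_mem_eq_sup' hS l
  set T := S.filter (fun s => l s = M) with hT
  have ht₀ : s₀ ∈ T := Finset.mem_filter.mpr ⟨hs₀S, hs₀.symm⟩
  have hnotmem : v -ᵥ s₀ ∉ (affineSpan ℝ (↑T : Set V)).direction := by
    rw [direction_affineSpan]
    intro hmem
    have hconst : ∀ s ∈ (↑T : Set V), l s = M := fun s hs =>
      (Finset.mem_filter.mp (Finset.mem_coe.mp hs)).2
    have h2 : v -ᵥ s₀ ∈ LinearMap.ker l := vspan_le_ker (↑T : Set V) l M hconst hmem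
    rw [LinearMap.mem_ker, vsub_eq_sub, map_sub, sub_eq_zero] at h2
    rw [← hs₀] at h2
    exact absurd h2 (ne_of_lt hb)
  have hmem2 : v -ᵥ s₀ ∈ (affineSpan ℝ (S : Set V)).direction :=
    AffineSubspace.vsub_mem_direction
      (mem_affineSpan ℝ (Finset.mem_coe.mpr hv))
      (mem_affineSpan ℝ (Finset.mem_coe.mpr hs₀S))
  have hlt : (affineSpan ℝ (↑T : Set V)).direction < (affineSpan ℝ (S : Set V)).direction := by
    rw [SetLike.lt_iff_le_and_exists]
    exact ⟨AffineSubspace.direction_le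
      (affineSpan_mono ℝ (Finset.coe_subset.mpr (Finset.filter_subset _ S))),
      v -ᵥ s₀, hmem2, hnotmem⟩
  exact Submodule.finrank_lt_finrank_of_lt hlt

lemma grow' [FiniteDimensional ℝ V] (S : Finset V) (hS : S.Nonempty) (v : V) (hv : v ∈ S)
    (l : V →ₗ[ℝ] ℝ) (hb : l v < S.sup' hS l)
    (hlow : finrank ℝ (affineSpan ℝ (↑(S.filter fun s => l s = S.sup' hS l) : Set V)).direction + 2
      ≤ finrank ℝ (affineSpan ℝ (S : Set V)).direction) :
    ∃ l' : V →ₗ[ℝ] ℝ, (l' v < S.sup' hS l') ∧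
      finrank ℝ (affineSpan ℝ (↑(S.filter fun s => l s = S.sup' hS l) : Set V)).direction
        < finrank ℝ (affineSpan ℝ (↑(S.filter fun s => l' s = S.sup' hS l') : Set V)).direction := by
  set M := S.sup' hS l with hM
  obtain ⟨t₀, ht₀S, ht₀max⟩ := S.exists_mem_eq_sup' hS l
  set T := S.filter (fun s => l s = M) with hT
  have ht₀T : t₀ ∈ T := Finset.mem_filter.mpr ⟨ht₀S, ht₀max.symm⟩
  have hub : ∀ s ∈ S, l s ≤ M := fun s hs => Finset.le_sup' l hs
  set AT := affineSpan ℝ (↑T : Set V) with hAT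
  have ht₀AT : (t₀ : V) ∈ AT := subset_affineSpan ℝ _ (Finset.mem_coe.mpr ht₀T)
  set B := affineSpan ℝ (insert v (AT : Set V)) with hB
  have hATB : AT ≤ B := by
    refine fun x hx => subset_affineSpan ℝ _ (Set.mem_insert_of_mem v ?_)
    exact hx
  have hvB : v ∈ B := subset_affineSpan ℝ _ (Set.mem_insert v _)
  have ht₀B : (t₀ : V) ∈ B := hATB ht₀AT
  have hTB : ∀ t ∈ T, (t : V) ∈ B := fun t ht =>
    hATB (subset_affineSpan ℝ _ (Finset.mem_coe.mpr ht))
  -- dimension bound on B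
  have hdimB : finrank ℝ B.direction ≤ finrank ℝ AT.direction + 1 := by
    have hdir : B.direction = Submodule.span ℝ {v -ᵥ t₀} ⊔ AT.direction :=
      AffineSubspace.direction_affineSpan_insert ht₀AT
    rw [hdir]
    have h1 : finrank ℝ (Submodule.span ℝ {v -ᵥ t₀}) ≤ 1 := by
      by_cases hz : v -ᵥ t₀ = (0 : V)
      · have : v -ᵥ t₀ = (0 : V) := hz
        rw [this, Submodule.span_zero_singleton]
        simp [finrank_bot]
      · rw [finrank_span_singleton hz]
    calc finrank ℝ ↥(Submodule.span ℝ {v -ᵥ t₀} ⊔ AT.direction)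
        ≤ finrank ℝ (Submodule.span ℝ {v -ᵥ t₀}) + finrank ℝ AT.direction :=
          Submodule.finrank_add_le_finrank_add_finrank _ _
      _ ≤ finrank ℝ AT.direction + 1 := by omega
  -- some point of S is outside B
  have hex : ∃ s ∈ S, (s : V) ∉ B := by
    by_contra hcon
    push_neg at hcon
    have hle : affineSpan ℝ (S : Set V) ≤ B :=
      affineSpan_le.mpr (fun x hx => hcon x (Finset.mem_coe.mp hx))
    have := Submodule.finrank_mono (AffineSubspace.direction_le hle)
    omega
  obtain ⟨s₀, hs₀S, hs₀B⟩ := hex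
  have hx : s₀ -ᵥ t₀ ∉ B.direction := fun hmem =>
    hs₀B ((AffineSubspace.vsub_right_mem_direction_iff_mem ht₀B s₀).mp hmem)
  obtain ⟨g, hg0, hg1⟩ := sep_dual B.direction hx
  set c := g t₀ with hc
  have hgB : ∀ b ∈ B, g b = c := by
    intro b hbB
    have : g (b -ᵥ t₀) = 0 := hg0 _ (AffineSubspace.vsub_mem_direction hbB ht₀B)
    rw [vsub_eq_sub, map_sub, sub_eq_zero] at this
    exact this
  have hgs₀ : g s₀ = c + 1 := by
    have : g (s₀ -ᵥ t₀) = 1 := hg1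
    rw [vsub_eq_sub, map_sub] at this
    linarith
  have hgv : g v = c := hgB v hvB
  have hgT : ∀ t ∈ T, g t = c := fun t ht => hgB t (hTB t ht)
  set Sp := S.filter (fun s => c < g s) with hSp
  have hs₀p : s₀ ∈ Sp := Finset.mem_filter.mpr ⟨hs₀S, by rw [hgs₀]; linarith⟩
  have hSpne : Sp.Nonempty := ⟨s₀, hs₀p⟩
  have hSplt : ∀ s ∈ Sp, l s < M := by
    intro s hs
    obtain ⟨hsS, hsg⟩ := Finset.mem_filter.mp hs
    rcases lt_or_eq_of_le (hub s hsS) with h | h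
    · exact h
    · exact absurd (hgT s (Finset.mem_filter.mpr ⟨hsS, h⟩)) (ne_of_gt hsg)
  have hSpg : ∀ s ∈ Sp, 0 < g s - c := fun s hs =>
    sub_pos.mpr (Finset.mem_filter.mp hs).2
  set r : V → ℝ := fun s => (M - l s) / (g s - c) with hr
  set ts := Sp.inf' hSpne r with hts
  have htspos : 0 < ts := by
    rw [hts, Finset.lt_inf'_iff]
    exact fun s hs => div_pos (sub_pos.mpr (hSplt s hs)) (hSpg s hs)
  obtain ⟨s₁, hs₁Sp, hs₁inf⟩ := Finset.exists_mem_eq_inf' hSpne r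
  have hs₁S : s₁ ∈ S := (Finset.mem_filter.mp hs₁Sp).1
  set l' := l + ts • g with hl'
  have happ : ∀ x : V, l' x = l x + ts * g x := fun x => rfl
  -- upper bound for l' on S
  have hub' : ∀ s ∈ S, l' s ≤ M + ts * c := by
    intro s hsS
    rw [happ]
    by_cases hcs : c < g s
    · have hsp : s ∈ Sp := Finset.mem_filter.mpr ⟨hsS, hcs⟩
      have h1 : ts ≤ r s := hts ▸ Finset.inf'_le r hsp
      have h2 : ts * (g s - c) ≤ M - l s := by
        rw [hr] at h1
        calc ts * (g s - c) ≤ ((M - l s) / (g s - c)) * (g s - c) :=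
              mul_le_mul_of_nonneg_right h1 (le_of_lt (hSpg s hsp))
          _ = M - l s := div_mul_cancel₀ _ (ne_of_gt (hSpg s hsp))
      have := mul_sub ts (g s) c
      linarith
    · push_neg at hcs
      have h1 : ts * g s ≤ ts * c := mul_le_mul_of_nonneg_left hcs (le_of_lt htspos)
      have h2 := hub s hsS
      linarith
  -- value on T and on s₁
  have hT' : ∀ t ∈ T, l' t = M + ts * c := by
    intro t ht
    rw [happ, (Finset.mem_filter.mp ht).2, hgT t ht]
  have hs₁val : l' s₁ = M + ts * c := by
    rw [happ]
    have hpos := hSpg s₁ hs₁Sp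
    have : ts * (g s₁ - c) = M - l s₁ := by
      rw [hts, hs₁inf, hr]
      exact div_mul_cancel₀ _ (ne_of_gt hpos)
    have h2 := mul_sub ts (g s₁) c
    linarith
  -- new max
  have hmax' : S.sup' hS l' = M + ts * c := by
    refine le_antisymm (Finset.sup'_le hS l' hub') ?_
    calc M + ts * c = l' t₀ := (hT' t₀ ht₀T).symm
      _ ≤ S.sup' hS l' := Finset.le_sup' l' ht₀S
  -- v is below the new max
  have hb' : l' v < S.sup' hS l' := by
    rw [hmax', happ, hgv]
    have : l v < M := lt_of_lt_of_le hb (le_of_eq hM.symm)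
    linarith
  refine ⟨l', hb', ?_⟩
  -- the new argmax face is strictly bigger
  set T' := S.filter (fun s => l' s = S.sup' hS l') with hT'def
  have hTT' : ∀ t ∈ T, t ∈ T' := fun t ht =>
    Finset.mem_filter.mpr ⟨(Finset.mem_filter.mp ht).1, by rw [hT' t ht, hmax']⟩
  have hs₁T' : s₁ ∈ T' := Finset.mem_filter.mpr ⟨hs₁S, by rw [hs₁val, hmax']⟩
  have hs₁AT : (s₁ : V) ∉ AT := by
    intro hmem
    have : g s₁ = c := hgB s₁ (hATB hmem)
    exact absurd this (ne_of_gt (Finset.mem_filter.mp hs₁Sp).2)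
  have hlt : AT < affineSpan ℝ (↑T' : Set V) := by
    rw [SetLike.lt_iff_le_and_exists]
    refine ⟨affineSpan_mono ℝ (fun x hx => ?_), s₁,
      subset_affineSpan ℝ _ (Finset.mem_coe.mpr hs₁T'), hs₁AT⟩
    exact Finset.mem_coe.mpr (hTT' x (Finset.mem_coe.mp hx))
  have hdirlt : AT.direction < (affineSpan ℝ (↑T' : Set V)).direction :=
    AffineSubspace.direction_lt_of_nonempty hlt ⟨t₀, ht₀AT⟩
  exact Submodule.finrank_lt_finrank_of_lt hdirlt

lemma reach' [FiniteDimensional ℝ V] (S : Finset V) (hS : S.Nonempty) (v : V) (hv : v ∈ S) :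
    ∀ (n : ℕ) (l : V →ₗ[ℝ] ℝ), l v < S.sup' hS l →
      finrank ℝ (affineSpan ℝ (S : Set V)).direction
        ≤ n + finrank ℝ (affineSpan ℝ (↑(S.filter fun s => l s = S.sup' hS l) : Set V)).direction
          + 1 →
      ∃ l' : V →ₗ[ℝ] ℝ, l' v < S.sup' hS l' ∧
        finrank ℝ (affineSpan ℝ (↑(S.filter fun s => l' s = S.sup' hS l') : Set V)).direction + 1
          = finrank ℝ (affineSpan ℝ (S : Set V)).direction := by
  intro n
  induction n with
  | zero =>
    intro l hb hbound
    have hlt := argmax_dim_lt' S hS v hv l hb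
    exact ⟨l, hb, by omega⟩
  | succ n ih =>
    intro l hb hbound
    have hlt := argmax_dim_lt' S hS v hv l hb
    by_cases heq : finrank ℝ (affineSpan ℝ
        (↑(S.filter fun s => l s = S.sup' hS l) : Set V)).direction + 1
        = finrank ℝ (affineSpan ℝ (S : Set V)).direction
    · exact ⟨l, hb, heq⟩
    · obtain ⟨l', hb', hlt'⟩ := grow' S hS v hv l hb (by omega)
      exact ih l' hb' (by omega)

end Helpers

open Module in
theorem facet_avoiding_vertex (D : ℕ) (S : Finset (Fin D → ℝ))
    (P : Set (Fin D → ℝ)) (hP : P = convexHull ℝ (S : Set (Fin D → ℝ)))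
    (k : ℕ) (hk : 1 ≤ k) (hdim : faceDim P = (k : ℤ))
    (v : Fin D → ℝ) (hv : IsVertex P v) :
    ∃ f, IsFace P f ∧ faceDim f = (k : ℤ) - 1 ∧ v ∉ f := by
  subst hP
  -- P is nonempty
  have hPne : convexHull ℝ (S : Set (Fin D → ℝ)) ≠ ∅ := by
    intro h
    rw [faceDim, if_pos h] at hdim
    omega
  have hSne : S.Nonempty := by
    rw [← Finset.coe_nonempty]
    rw [← convexHull_nonempty_iff (𝕜 := ℝ)]
    exact nonempty_iff_ne_empty.mpr hPne
  -- dimension of the affine span of S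
  have hK : finrank ℝ (affineSpan ℝ (S : Set (Fin D → ℝ))).direction = k := by
    rw [faceDim, if_neg hPne, affineSpan_convexHull] at hdim
    exact_mod_cast hdim
  -- P is not the singleton {v}
  have hPnsing : convexHull ℝ (S : Set (Fin D → ℝ)) ≠ {v} := by
    intro h
    rw [faceDim, if_neg hPne, h, direction_affineSpan, vectorSpan_singleton] at hdim
    simp [finrank_bot] at hdim
    omega
  -- extract the functional for the vertex
  rcases hv with hempty | hPsing | ⟨l, hl⟩
  · exact absurd hempty (Set.singleton_ne_empty v)
  · exact absurd hPsing.symm hPnsing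
  -- v belongs to the face, hence maximizes l
  have hvface : v ∈ {x ∈ convexHull ℝ (S : Set (Fin D → ℝ)) |
      ∀ y ∈ convexHull ℝ (S : Set (Fin D → ℝ)), l y ≤ l x} := by
    rw [← hl]; exact rfl
  obtain ⟨hvP, hvmax⟩ := hvface
  -- the maximizer of l over S is v itself, so v ∈ S
  obtain ⟨sstar, hsS, hsmax⟩ := S.exists_mem_eq_sup' hSne l
  have hstarface : sstar ∈ {x ∈ convexHull ℝ (S : Set (Fin D → ℝ)) |
      ∀ y ∈ convexHull ℝ (S : Set (Fin D → ℝ)), l y ≤ l x} := by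
    refine ⟨subset_convexHull ℝ _ (Finset.mem_coe.mpr hsS), ?_⟩
    refine hull_le' _ l (l sstar) (fun s hs => ?_)
    rw [← hsmax]
    exact Finset.le_sup' l (Finset.mem_coe.mp hs)
  rw [← hl, Set.mem_singleton_iff] at hstarface
  have hvS : v ∈ S := hstarface ▸ hsS
  have hsupv : S.sup' hSne l = l v := by rw [hsmax, hstarface]
  -- some point of S has strictly smaller l-value
  have hexlt : ∃ s ∈ S, l s < l v := by
    by_contra hcon
    push_neg at hcon
    have hconst : ∀ s ∈ (S : Set (Fin D → ℝ)), l s = l v := fun s hs =>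
      le_antisymm (hsupv ▸ Finset.le_sup' l (Finset.mem_coe.mp hs))
        (hcon s (Finset.mem_coe.mp hs))
    apply hPnsing
    have hface_eq : {x ∈ convexHull ℝ (S : Set (Fin D → ℝ)) |
        ∀ y ∈ convexHull ℝ (S : Set (Fin D → ℝ)), l y ≤ l x}
        = convexHull ℝ (S : Set (Fin D → ℝ)) := by
      ext x
      refine ⟨fun hx => hx.1, fun hx => ⟨hx, fun y hy => ?_⟩⟩
      rw [hull_eq_const' _ l (l v) hconst y hy, hull_eq_const' _ l (l v) hconst x hx]
    rw [← hface_eq, ← hl]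
  obtain ⟨s₁, hs₁S, hs₁lt⟩ := hexlt
  -- starting functional: -l
  have hb₀ : (-l) v < S.sup' hSne (-l) := by
    have h1 : (-l) v < (-l) s₁ := by simp; linarith
    exact lt_of_lt_of_le h1 (Finset.le_sup' (⇑(-l)) hs₁S)
  obtain ⟨lstar, hbstar, hdimstar⟩ :=
    reach' S hSne v hvS (finrank ℝ (affineSpan ℝ (S : Set (Fin D → ℝ))).direction) (-l) hb₀
      (by omega)
  refine ⟨{x ∈ convexHull ℝ (S : Set (Fin D → ℝ)) |
      ∀ y ∈ convexHull ℝ (S : Set (Fin D → ℝ)), lstar y ≤ lstar x},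
    Or.inr (Or.inr ⟨lstar, rfl⟩), ?_, ?_⟩
  · -- dimension computation
    rw [face_eq_hull' S hSne lstar]
    obtain ⟨t₀, ht₀S, ht₀max⟩ := S.exists_mem_eq_sup' hSne lstar
    have ht₀T : t₀ ∈ S.filter (fun s => lstar s = S.sup' hSne lstar) :=
      Finset.mem_filter.mpr ⟨ht₀S, ht₀max.symm⟩
    have hne : convexHull ℝ
        (↑(S.filter fun s => lstar s = S.sup' hSne lstar) : Set (Fin D → ℝ)) ≠ ∅ := by
      rw [← nonempty_iff_ne_empty, convexHull_nonempty_iff, Finset.coe_nonempty]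
      exact ⟨t₀, ht₀T⟩
    rw [faceDim, if_neg hne, affineSpan_convexHull]
    rw [hK] at hdimstar
    push_cast [← hdimstar]
    ring
  · -- v is not in the face
    intro hvf
    obtain ⟨s', hs'S, hs'max⟩ := S.exists_mem_eq_sup' hSne lstar
    have h1 : lstar s' ≤ lstar v := hvf.2 s' (subset_convexHull ℝ _ (Finset.mem_coe.mpr hs'S))
    rw [hs'max] at hbstar
    linarith
end
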